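/- arXiv:2210.11396 — 10 statements merged into one kernel-verified Lean document; each statement's English description precedes it below -/
import Mathlib

section
/- The function φ(z) = z(z−i)^{i−1} (principal branch) defined on the unit disc satisfies Re(e^{iπ/4} · zφ'(z)/φ(z)) > 0 for all z in the open unit disc; equivalently, zφ'(z)/φ(z) = i(1−z)/(i−z) has real part of its e^{iπ/4}-rotation positive on the disc. -/
open Complex

/-- φ(z) = z(z−i)^{i−1} satisfies the (−π/4)-spirallikeness criterion on 𝔻:
for z ≠ 0, zφ'(z)/φ(z) = i(1−z)/(i−z), and Re(e^{iπ/4}·i(1−z)/(i−z)) > 0 on the disc. -/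
theorem stmt_0 (φ : ℂ → ℂ)
    (hφ : ∀ z : ℂ, φ z = z * (z - I) ^ (I - 1)) :
    ∀ z : ℂ, ‖z‖ < 1 →
      (z ≠ 0 → z * deriv φ z / φ z = I * (1 - z) / (I - z)) ∧
      0 < (Complex.exp (I * (Real.pi / 4)) * (I * (1 - z) / (I - z))).re := by
  intro z hz
  have hy : |z.im| < 1 := lt_of_le_of_lt (Complex.abs_im_le_norm z) hz
  have him : (z - I).im ≠ 0 := by
    simp only [Complex.sub_im, Complex.I_im]
    have := abs_lt.mp hy
    intro h; linarith [this.2]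
  have hzI : z - I ≠ 0 := fun h => him (by rw [h]; simp)
  have hIz : I - z ≠ 0 := fun h => hzI (by rw [← neg_sub] at h; simpa using neg_eq_zero.mp h)
  constructor
  · intro hz0
    have hg : HasDerivAt (fun w => (w - I) ^ (I - 1))
        ((I - 1) * (z - I) ^ (I - 1 - 1) * 1) z :=
      ((hasDerivAt_id z).sub_const I).cpow_const (Or.inr him)
    have hd : HasDerivAt φ (1 * (z - I) ^ (I - 1) + z * ((I - 1) * (z - I) ^ (I - 1 - 1) * 1)) z := by
      have : HasDerivAt (fun w => w * (w - I) ^ (I - 1))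
          (1 * (z - I) ^ (I - 1) + z * ((I - 1) * (z - I) ^ (I - 1 - 1) * 1)) z :=
        (hasDerivAt_id z).mul hg
      exact this.congr_of_eventuallyEq (Filter.Eventually.of_forall fun w => (hφ w))
    rw [hd.deriv, hφ]
    have hsplit : (z - I) ^ (I - 1) = (z - I) ^ (I - 1 - 1) * (z - I) := by
      have h1 := (Complex.cpow_add (I - 1 - 1) 1 hzI).symm
      rw [Complex.cpow_one] at h1
      rw [h1]; congr 1; ring
    have hne : (z - I) ^ (I - 1 - 1) ≠ 0 := by
      simp [Complex.cpow_def, hzI, Complex.exp_ne_zero]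
    rw [hsplit]
    field_simp
    ring
  · have hexp : Complex.exp (I * (Real.pi / 4)) =
        (Real.cos (Real.pi / 4) : ℂ) + (Real.sin (Real.pi / 4) : ℂ) * I := by
      rw [show (I * ((Real.pi : ℂ) / 4)) = ((Real.pi / 4 : ℝ) : ℂ) * I by push_cast; ring,
        Complex.exp_mul_I]
      rw [← Complex.ofReal_cos, ← Complex.ofReal_sin]
    have h2 : z.re ^ 2 + z.im ^ 2 < 1 := by
      have h3 : ‖z‖ < 1 := hz
      nlinarith [Complex.sq_norm z, Complex.normSq_apply z, norm_nonneg z]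
    have hD : 0 < Complex.normSq (I - z) := Complex.normSq_pos.mpr hIz
    have hDpos : (0:ℝ) < z.re * z.re + (1 - z.im) * (1 - z.im) := by
      have := hD; rw [Complex.normSq_apply] at this
      simp only [Complex.sub_re, Complex.sub_im, Complex.I_re, Complex.I_im] at this
      nlinarith [this]
    have hDne : z.re * z.re + (1 - z.im) * (1 - z.im) ≠ 0 := ne_of_gt hDpos
    have hval : (Complex.exp (I * (Real.pi / 4)) * (I * (1 - z) / (I - z))).re =
        Real.sqrt 2 / 2 *
          ((1 - z.re ^ 2 - z.im ^ 2) / (z.re * z.re + (1 - z.im) * (1 - z.im))) := by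
      rw [hexp, Real.cos_pi_div_four, Real.sin_pi_div_four]
      simp only [Complex.mul_re, Complex.add_re, Complex.add_im, Complex.mul_im, Complex.div_re,
        Complex.div_im, Complex.I_re, Complex.I_im, Complex.one_re, Complex.one_im,
        Complex.sub_re, Complex.sub_im, Complex.ofReal_re, Complex.ofReal_im,
        Complex.normSq_apply]
      field_simp
      ring
    rw [hval]
    have hs : 0 < Real.sqrt 2 := by positivity
    apply mul_pos (by positivity)
    apply div_pos (by nlinarith) hDpos
end

section
/- For every θ ∈ [0, 2π), Arg(e^{iθ} − i) = −π/4 + θ/2 (with a suitable choice of continuous branch), and consequently the boundary values satisfy φ(e^{iθ}) = φ(1)·exp(−(e^{−iπ/4}√2/2)(log(1 − sin θ) + θ)) where φ(z) = z(z−i)^{i−1}; in particular |φ(e^{iθ})| and arg(φ(e^{iθ})) move along the logarithmic spiral w = φ(1)exp(e^{−iπ/4}t). -/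
open Complex

/-- boundary behaviour of φ(z) = z(z−i)^{i−1}. With the continuous branch of the
argument of e^{iθ} − i equal to −π/4 + θ/2 (up to a real factor), the boundary values satisfy
φ(e^{iθ}) = φ(1)·exp(−(e^{−iπ/4}√2/2)(log(1−sin θ)+θ)). Here Φ θ denotes φ(e^{iθ}) computed
with this branch. -/
theorem stmt_1 (Φ : ℝ → ℂ)
    (hΦ : ∀ θ : ℝ, Φ θ = Complex.exp (I * θ) *
      Complex.exp ((I - 1) * ((Real.log ‖Complex.exp (I * θ) - I‖ : ℂ) +
        I * (θ / 2 - Real.pi / 4)))) :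
    ∀ θ : ℝ, 0 ≤ θ → θ < 2 * Real.pi → Real.sin θ ≠ 1 →
      (∃ c : ℝ, Complex.exp (I * θ) - I = (c : ℂ) * Complex.exp (I * (-(Real.pi / 4) + θ / 2))) ∧
      Φ θ = Φ 0 * Complex.exp (-(Complex.exp (-(I * (Real.pi / 4))) * (Real.sqrt 2 / 2)) *
        ((Real.log (1 - Real.sin θ) + θ : ℝ) : ℂ)) := by
  intro θ h0 h2 hs1
  have hslt : Real.sin θ < 1 := lt_of_le_of_ne (Real.sin_le_one θ) hs1
  have hpos : 0 < 1 - Real.sin θ := by linarith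
  have h2s : Real.sqrt 2 * Real.sqrt 2 = 2 := Real.mul_self_sqrt (by norm_num)
  constructor
  · refine ⟨2 * Real.sin (Real.pi/4 - θ/2), ?_⟩
    have harg : I * (-((Real.pi:ℂ)/4) + (θ:ℂ)/2) = ((-(Real.pi/4) + θ/2 : ℝ) : ℂ) * I := by
      push_cast; ring
    rw [mul_comm I (θ:ℂ), harg, Complex.exp_mul_I, Complex.exp_mul_I]
    have key1 : Real.cos θ = 2 * Real.sin (Real.pi/4 - θ/2) * Real.cos (-(Real.pi/4) + θ/2) := by
      rw [Real.sin_sub, Real.cos_add, Real.cos_neg, Real.sin_neg,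
        Real.sin_pi_div_four, Real.cos_pi_div_four]
      have hcos : Real.cos θ = 2 * Real.cos (θ/2)^2 - 1 := by
        rw [← Real.cos_two_mul]; ring_nf
      nlinarith [Real.cos_sq_add_sin_sq (θ/2), h2s, hcos]
    have key2 : Real.sin θ - 1 = 2 * Real.sin (Real.pi/4 - θ/2) * Real.sin (-(Real.pi/4) + θ/2) := by
      rw [Real.sin_sub, Real.sin_add, Real.cos_neg, Real.sin_neg,
        Real.sin_pi_div_four, Real.cos_pi_div_four]
      have hsin : Real.sin θ = 2 * Real.sin (θ/2) * Real.cos (θ/2) := by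
        have := Real.sin_two_mul (θ/2); rw [← this]; ring_nf
      nlinarith [Real.cos_sq_add_sin_sq (θ/2), h2s, hsin]
    have k1c : Complex.cos (θ:ℂ) = 2 * Complex.sin ((Real.pi:ℂ)/4 - (θ:ℂ)/2) * Complex.cos (-((Real.pi:ℂ)/4) + (θ:ℂ)/2) := by
      exact_mod_cast congrArg (Complex.ofReal) key1
    have k2c : Complex.sin (θ:ℂ) - 1 = 2 * Complex.sin ((Real.pi:ℂ)/4 - (θ:ℂ)/2) * Complex.sin (-((Real.pi:ℂ)/4) + (θ:ℂ)/2) := by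
      exact_mod_cast congrArg (Complex.ofReal) key2
    push_cast
    linear_combination k1c + I * k2c
  · have hnorm : ‖Complex.exp (I * θ) - I‖ = Real.sqrt (2 * (1 - Real.sin θ)) := by
      rw [mul_comm I (θ:ℂ), Complex.exp_mul_I, ← Complex.ofReal_cos, ← Complex.ofReal_sin]
      rw [Complex.norm_def]
      have hmk : ((Real.cos θ : ℂ) + (Real.sin θ:ℂ) * I - I) = ⟨Real.cos θ, Real.sin θ - 1⟩ := by
        apply Complex.ext <;> simp [Complex.cos_ofReal_re, Complex.sin_ofReal_re]
      rw [hmk, Complex.normSq_mk]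
      congr 1
      nlinarith [Real.cos_sq_add_sin_sq θ]
    have hnorm0 : ‖Complex.exp (I * ((0:ℝ):ℂ)) - I‖ = Real.sqrt 2 := by
      simp only [Complex.ofReal_zero, mul_zero, Complex.exp_zero]
      rw [Complex.norm_def]
      have hmk : (1 - I : ℂ) = ⟨1, -1⟩ := by apply Complex.ext <;> simp
      rw [hmk, Complex.normSq_mk]; norm_num
    have hL : (Real.log ‖Complex.exp (I * θ) - I‖ : ℂ)
        = ((Real.log 2 + Real.log (1 - Real.sin θ))/2 : ℝ) := by
      rw [hnorm, Real.log_sqrt (by positivity), Real.log_mul (by norm_num) (by positivity)]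
    have hL0 : (Real.log ‖Complex.exp (I * ((0:ℝ):ℂ)) - I‖ : ℂ) = ((Real.log 2 / 2 : ℝ) : ℂ) := by
      rw [hnorm0, Real.log_sqrt (by norm_num)]
    have hE : Complex.exp (-(I * ((Real.pi : ℂ) / 4))) = (Real.sqrt 2 : ℂ)/2 * (1 - I) := by
      rw [show -(I * ((Real.pi : ℂ)/4)) = ((-(Real.pi/4) : ℝ) : ℂ) * I by push_cast; ring,
        Complex.exp_mul_I, ← Complex.ofReal_cos, ← Complex.ofReal_sin,
        Real.cos_neg, Real.sin_neg, Real.cos_pi_div_four, Real.sin_pi_div_four]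
      push_cast; ring
    rw [hΦ θ, hΦ 0, hL, hL0, hE]
    simp only [Complex.ofReal_zero, mul_zero, Complex.exp_zero, one_mul, zero_div]
    rw [← Complex.exp_add, ← Complex.exp_add]
    congr 1
    push_cast
    have h2c : (Real.sqrt 2 : ℂ) * (Real.sqrt 2 : ℂ) = 2 := by
      rw [← Complex.ofReal_mul, h2s]; norm_num
    linear_combination ((1:ℂ)-I)*((Real.log (1 - Real.sin θ) : ℂ)+(θ:ℂ))/4 * h2c + ((θ:ℂ)/2) * Complex.I_sq
end

section
/- Let ζ₁,…,ζₙ be distinct points on the unit circle, b₁,…,bₙ > 0, a ∈ ℝ, and set b = b₁+⋯+bₙ, Q(z) = Σₖ bₖ(ζₖ+z)∏_{j≠k}(ζⱼ−z), R(z) = ∏ₖ(ζₖ−z). Then every root ξ of the polynomial Q(z) − iaR(z) lies on the unit circle and is distinct from each ζₖ. -/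
open Complex

lemma re_moebius (ζ ξ : ℂ) (h1 : normSq ζ = 1) :
    ((ζ + ξ) / (ζ - ξ)).re = (1 - normSq ξ) / normSq (ζ - ξ) := by
  have hnum : (ζ + ξ).re * (ζ - ξ).re + (ζ + ξ).im * (ζ - ξ).im = 1 - normSq ξ := by
    simp only [Complex.normSq_apply, Complex.add_re, Complex.add_im, Complex.sub_re,
      Complex.sub_im] at h1 ⊢
    linear_combination h1
  rw [Complex.div_re, ← add_div, hnum]

/-- every root of Q(z) − iaR(z) lies on the unit circle and differs from all ζₖ,
where Q(z) = Σₖ bₖ(ζₖ+z)∏_{j≠k}(ζⱼ−z) and R(z) = ∏ₖ(ζₖ−z). -/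
theorem stmt_3 (n : ℕ) (hn : 0 < n) (ζ : Fin n → ℂ) (hζ : ∀ k, ‖ζ k‖ = 1)
    (hdist : Function.Injective ζ) (b : Fin n → ℝ) (hb : ∀ k, 0 < b k) (a : ℝ) :
    ∀ ξ : ℂ,
      (∑ k, (b k : ℂ) * (ζ k + ξ) * ∏ j ∈ Finset.univ.erase k, (ζ j - ξ)) -
        I * (a : ℂ) * ∏ k, (ζ k - ξ) = 0 →
      ‖ξ‖ = 1 ∧ ∀ k, ξ ≠ ζ k := by
  intro ξ h
  have hζ1 : ∀ k, normSq (ζ k) = 1 := by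
    intro k
    rw [← Complex.sq_norm, hζ k, one_pow]
  -- Step 1: ξ ≠ ζ k
  have hneq : ∀ k, ξ ≠ ζ k := by
    intro k hk
    have hprod0 : (∏ k', (ζ k' - ξ)) = 0 :=
      Finset.prod_eq_zero (Finset.mem_univ k) (by rw [hk, sub_self])
    have hsum : (∑ m, (b m : ℂ) * (ζ m + ξ) * ∏ j ∈ Finset.univ.erase m, (ζ j - ξ)) =
        (b k : ℂ) * (ζ k + ξ) * ∏ j ∈ Finset.univ.erase k, (ζ j - ξ) := by
      refine Finset.sum_eq_single k ?_ (by simp)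
      intro m _ hm
      have : (∏ j ∈ Finset.univ.erase m, (ζ j - ξ)) = 0 :=
        Finset.prod_eq_zero (Finset.mem_erase.mpr ⟨hm.symm, Finset.mem_univ k⟩)
          (by rw [hk, sub_self])
      rw [this, mul_zero]
    rw [hsum, hprod0, mul_zero, sub_zero] at h
    have h1 : (b k : ℂ) ≠ 0 := Complex.ofReal_ne_zero.mpr (hb k).ne'
    have h2 : (ζ k + ξ) ≠ 0 := by
      have hz : ζ k ≠ 0 := by
        intro h0
        have := hζ k; rw [h0] at this; simp at this
      rw [hk]
      simpa [two_mul] using mul_ne_zero (two_ne_zero (α := ℂ)) hz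
    have h3 : (∏ j ∈ Finset.univ.erase k, (ζ j - ξ)) ≠ 0 := by
      rw [Finset.prod_ne_zero_iff]
      intro j hj
      rw [hk]
      exact sub_ne_zero.mpr fun e => (Finset.mem_erase.mp hj).1 (hdist e)
    exact (mul_ne_zero (mul_ne_zero h1 h2) h3) h
  have hne : ∀ k, ζ k - ξ ≠ 0 := fun k => sub_ne_zero.mpr fun e => hneq k e.symm
  have hR : (∏ k, (ζ k - ξ)) ≠ 0 := Finset.prod_ne_zero_iff.mpr fun k _ => hne k
  -- divide equation by R
  have key : (∑ k, (b k : ℂ) * (ζ k + ξ) / (ζ k - ξ)) = I * (a : ℂ) := by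
    have hmul : (∑ k, (b k : ℂ) * (ζ k + ξ) / (ζ k - ξ)) * (∏ k, (ζ k - ξ)) =
        (I * (a : ℂ)) * (∏ k, (ζ k - ξ)) := by
      rw [Finset.sum_mul]
      have : ∀ k ∈ Finset.univ, (b k : ℂ) * (ζ k + ξ) / (ζ k - ξ) * (∏ k, (ζ k - ξ)) =
          (b k : ℂ) * (ζ k + ξ) * ∏ j ∈ Finset.univ.erase k, (ζ j - ξ) := by
        intro k _
        rw [← Finset.mul_prod_erase Finset.univ _ (Finset.mem_univ k),
          mul_comm (ζ k - ξ), div_mul_eq_mul_div, ← mul_assoc,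
          mul_div_cancel_right₀ _ (hne k)]
      rw [Finset.sum_congr rfl this]
      linear_combination sub_eq_zero.mp h
    exact mul_right_cancel₀ hR hmul
  -- take real parts
  have hre : (∑ k, (b k : ℂ) * (ζ k + ξ) / (ζ k - ξ)).re = 0 := by
    rw [key]; simp
  rw [Complex.re_sum] at hre
  have hterm : ∀ k, ((b k : ℂ) * (ζ k + ξ) / (ζ k - ξ)).re =
      (1 - normSq ξ) * (b k / normSq (ζ k - ξ)) := by
    intro k
    rw [mul_div_assoc, Complex.re_ofReal_mul, re_moebius _ _ (hζ1 k)]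
    ring
  rw [Finset.sum_congr rfl fun k _ => hterm k, ← Finset.mul_sum] at hre
  have hpos : 0 < ∑ k, b k / normSq (ζ k - ξ) := by
    apply Finset.sum_pos
    · intro k _
      exact div_pos (hb k) (Complex.normSq_pos.mpr (hne k))
    · exact Finset.univ_nonempty_iff.mpr (Fin.pos_iff_nonempty.mp hn)
  have h1 : normSq ξ = 1 := by
    rcases mul_eq_zero.mp hre with h' | h'
    · linarith
    · exact absurd h' hpos.ne'
  refine ⟨?_, hneq⟩
  rw [Complex.norm_def, h1, Real.sqrt_one]
end

section
/- With the setup of the previous statement, all roots of Q(z) − iaR(z) are simple: if ξ is a root with |ξ| = 1, ξ = e^{iρ}, then the derivative of g(z) = Σₖ bₖ (z + ζₖ ξ̄_â)/(ζₖ − z) at ξ equals −((1+ξ̄_â)/ξ)·Σₖ bₖ/(4 sin²((θₖ−ρ)/2)) ≠ 0, where ζₖ = e^{iθₖ}. -/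
open Complex

lemma stmt4_key (θ ρ : ℝ) :
    (Complex.exp (I*θ) - Complex.exp (I*ρ))^2
      = -(Complex.exp (I*θ) * Complex.exp (I*ρ)) * (4 * ((Real.sin ((θ-ρ)/2) : ℝ) : ℂ)^2) := by
  have huv : Complex.exp (I*θ) = Complex.exp (I*(((θ+ρ)/2 : ℝ))) * Complex.exp (I*(((θ-ρ)/2 : ℝ))) := by
    rw [← Complex.exp_add]; congr 1; push_cast; ring
  have huw : Complex.exp (I*ρ) = Complex.exp (I*(((θ+ρ)/2 : ℝ))) * Complex.exp (-(I*(((θ-ρ)/2 : ℝ)))) := by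
    rw [← Complex.exp_add]; congr 1; push_cast; ring
  have hvw : Complex.exp (I*(((θ-ρ)/2 : ℝ))) * Complex.exp (-(I*(((θ-ρ)/2 : ℝ)))) = 1 := by
    rw [← Complex.exp_add]; simp
  have hsin : ((Real.sin ((θ-ρ)/2) : ℝ) : ℂ)
      = (Complex.exp (-(I*(((θ-ρ)/2 : ℝ)))) - Complex.exp (I*(((θ-ρ)/2 : ℝ)))) * I / 2 := by
    rw [Complex.ofReal_sin, Complex.sin]
    ring_nf
  set u := Complex.exp (I*(((θ+ρ)/2 : ℝ)))
  set v := Complex.exp (I*(((θ-ρ)/2 : ℝ)))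
  set w := Complex.exp (-(I*(((θ-ρ)/2 : ℝ))))
  rw [huv, huw, hsin]
  have hI : (I:ℂ)^2 = -1 := Complex.I_sq
  linear_combination (-u^2*(v - w)^2) * hvw + u^2*v*w*(w-v)^2 * hI

/-- the roots of Q − iaR are simple: at a unimodular root ξ = e^{iρ} of
g(z) = Σₖ bₖ(z + ζₖ ξ̄_â)/(ζₖ − z) the derivative equals
−((1+ξ̄_â)/ξ)·Σₖ bₖ/(4 sin²((θₖ−ρ)/2)) ≠ 0. -/
theorem stmt_4 (n : ℕ) (hn : 0 < n) (θk : Fin n → ℝ) (b : Fin n → ℝ)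
    (hb : ∀ k, 0 < b k) (a ρ : ℝ)
    (ζ : Fin n → ℂ) (hζ : ∀ k, ζ k = Complex.exp (I * θk k))
    (hdist : Function.Injective ζ)
    (ξa : ℂ) (hξa : ξa = (1 + I * ((a / ∑ k, b k : ℝ) : ℂ)) / (1 - I * ((a / ∑ k, b k : ℝ) : ℂ)))
    (g : ℂ → ℂ)
    (hg : ∀ z, g z = ∑ k, (b k : ℂ) * (z + ζ k * (starRingEnd ℂ) ξa) / (ζ k - z))
    (ξ : ℂ) (hξ : ξ = Complex.exp (I * ρ)) (hne : ∀ k, ξ ≠ ζ k)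
    (hroot : g ξ = 0) :
    deriv g ξ = -((1 + (starRingEnd ℂ) ξa) / ξ) *
        ∑ k, ((b k / (4 * Real.sin ((θk k - ρ) / 2) ^ 2) : ℝ) : ℂ) ∧
      deriv g ξ ≠ 0 := by
  set d : ℝ := a / ∑ k, b k with hdd
  set c := (starRingEnd ℂ) ξa with hc
  have hξ0 : ξ ≠ 0 := by rw [hξ]; exact Complex.exp_ne_zero _
  have hζ0 : ∀ k, ζ k ≠ 0 := fun k => by rw [hζ]; exact Complex.exp_ne_zero _
  have hsub : ∀ k, ζ k - ξ ≠ 0 := fun k => sub_ne_zero.mpr (Ne.symm (hne k))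
  have hkey : ∀ k, (ζ k - ξ)^2
      = -(ζ k * ξ) * (4 * ((Real.sin ((θk k - ρ)/2) : ℝ) : ℂ)^2) := fun k => by
    rw [hζ, hξ]; exact stmt4_key (θk k) ρ
  have hsk : ∀ k, Real.sin ((θk k - ρ)/2) ≠ 0 := by
    intro k h
    have h2 := hkey k
    rw [h] at h2
    simp only [Complex.ofReal_zero] at h2
    apply hsub k
    have := pow_eq_zero_iff (n := 2) (by norm_num) |>.mp (by rw [h2]; ring)
    exact this
  -- derivative
  have hd : HasDerivAt g (∑ k, (b k:ℂ)*(ζ k + ζ k * c)/(ζ k - ξ)^2) ξ := by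
    have hfun : g = fun z => ∑ k, (b k:ℂ)*(z + ζ k * c)/(ζ k - z) := funext hg
    rw [hfun]
    apply HasDerivAt.fun_sum
    intro k _
    have h1 : HasDerivAt (fun z:ℂ => (b k:ℂ)*(z + ζ k * c)) (b k) ξ := by
      simpa using ((hasDerivAt_id ξ).add_const (ζ k * c)).const_mul (b k:ℂ)
    have h2 : HasDerivAt (fun z:ℂ => ζ k - z) (-1) ξ := by
      simpa using (hasDerivAt_id ξ).const_sub (ζ k)
    have h3 := h1.fun_div h2 (hsub k)
    exact h3.congr_deriv (by ring)
  have hderiv := hd.deriv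
  have hsum : (∑ k, (b k:ℂ)*(ζ k + ζ k*c)/(ζ k - ξ)^2)
      = -((1+c)/ξ) * ∑ k, ((b k / (4*Real.sin ((θk k - ρ)/2)^2) : ℝ) : ℂ) := by
    rw [Finset.mul_sum]
    apply Finset.sum_congr rfl
    intro k _
    have hs : ((Real.sin ((θk k - ρ)/2) : ℝ) : ℂ) ≠ 0 := by
      exact_mod_cast hsk k
    have hcast : ((b k / (4*Real.sin ((θk k - ρ)/2)^2) : ℝ) : ℂ)
        = (b k : ℂ) / (4 * ((Real.sin ((θk k - ρ)/2) : ℝ) : ℂ)^2) := by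
      push_cast [-Complex.ofReal_sin]; ring
    rw [hkey k, hcast, ← neg_div, div_mul_div_comm,
      div_eq_div_iff
        (mul_ne_zero (neg_ne_zero.mpr (mul_ne_zero (hζ0 k) hξ0))
          (mul_ne_zero (by norm_num) (pow_ne_zero 2 hs)))
        (mul_ne_zero hξ0 (mul_ne_zero (by norm_num) (pow_ne_zero 2 hs)))]
    ring
  -- nonvanishing of 1 + c
  have hden : (1 - I*((d : ℝ) : ℂ)) ≠ 0 := by
    intro h
    simpa using congrArg Complex.re h
  have hden' : (1 + I*((d : ℝ) : ℂ)) ≠ 0 := by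
    intro h
    simpa using congrArg Complex.re h
  have h1c : (1 + c) ≠ 0 := by
    rw [hc, hξa, map_div₀, map_add, map_sub, map_mul, map_one, Complex.conj_I,
      Complex.conj_ofReal]
    have hrw : (1 : ℂ) - -I * (d:ℂ) = 1 + I * (d:ℂ) := by ring
    have hrw2 : (1 : ℂ) + -I * (d:ℂ) = 1 - I * (d:ℂ) := by ring
    rw [hrw, hrw2]
    intro h
    rw [add_div' _ _ _ hden', div_eq_zero_iff] at h
    have h2 := h.resolve_right hden'
    have h3 : (2:ℂ) = 0 := by linear_combination h2
    norm_num at h3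
  have hSpos : (0:ℝ) < ∑ k, b k / (4*Real.sin ((θk k - ρ)/2)^2) := by
    apply Finset.sum_pos
    · intro k _
      apply div_pos (hb k)
      have h2 : 0 < Real.sin ((θk k - ρ)/2)^2 :=
        lt_of_le_of_ne (sq_nonneg _) (Ne.symm (pow_ne_zero 2 (hsk k)))
      exact mul_pos (by norm_num) h2
    · have : Nonempty (Fin n) := Fin.pos_iff_nonempty.mp hn
      exact Finset.univ_nonempty
  have hS0 : (∑ k, ((b k / (4*Real.sin ((θk k - ρ)/2)^2) : ℝ) : ℂ)) ≠ 0 := by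
    rw [← Complex.ofReal_sum]
    exact Complex.ofReal_ne_zero.mpr (ne_of_gt hSpos)
  constructor
  · rw [hderiv, hsum]
  · rw [hderiv, hsum]
    exact mul_ne_zero (neg_ne_zero.mpr (div_ne_zero h1c hξ0)) hS0
end

section
/- In the partial fraction decomposition ∏_{j=1}^{n}(z−kⱼ) = P(z)(Σ_{j=1}^{n−1} Aⱼ/(z−λⱼ) + B/(z−β) + B̄/(z−β̄)), the coefficients are given by B = ∏ⱼ(β−kⱼ)/(2i Im β · ∏ⱼ(β−λⱼ)) and Aⱼ = ∏ᵢ(λⱼ−kᵢ)/(∏_{i≠j}(λⱼ−λᵢ)·|λⱼ−β|²), and moreover each Aⱼ < 0. -/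
open Complex

private lemma prod_neg_sign (s : Finset ℕ) (f : ℕ → ℝ) :
    ∏ i ∈ s, f i = (-1) ^ s.card * ∏ i ∈ s, (-f i) := by
  rw [← Finset.prod_const, ← Finset.prod_mul_distrib]
  exact Finset.prod_congr rfl fun i _ => by ring

/-- the partial-fraction coefficients in
∏ⱼ(z−kⱼ) = P(z)(Σⱼ Aⱼ/(z−λⱼ) + B/(z−β) + B̄/(z−β̄)) are given by
B = ∏ⱼ(β−kⱼ)/(2i·Imβ·∏ⱼ(β−λⱼ)) and Aⱼ = ∏ᵢ(λⱼ−kᵢ)/(∏_{i≠j}(λⱼ−λᵢ)|λⱼ−β|²), with Aⱼ < 0. -/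
theorem stmt_10 (n : ℕ) (hn : 0 < n) (k : ℕ → ℝ)
    (hk : ∀ i j, i < j → j < n → k i < k j)
    (b : ℕ → ℝ) (hb : ∀ j, j < n → 0 < b j)
    (P : ℂ → ℂ)
    (hP : ∀ z, P z = z * ∏ j ∈ Finset.range n, (z - (k j : ℂ)) +
      ∑ j ∈ Finset.range n, 4 * (b j : ℂ) * ∏ i ∈ (Finset.range n).erase j, (z - (k i : ℂ)))
    (lam : ℕ → ℝ) (hlam : ∀ j, j + 1 < n → lam j ∈ Set.Ioo (k j) (k (j + 1)))
    (β : ℂ) (hβ : 0 < β.im)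
    (hfact : ∀ z : ℂ, P z =
      (z - β) * (z - (starRingEnd ℂ) β) * ∏ j ∈ Finset.range (n - 1), (z - (lam j : ℂ)))
    (A : ℕ → ℝ) (B : ℂ)
    (hPFD : ∀ z : ℂ, z ≠ β → z ≠ (starRingEnd ℂ) β → (∀ j, j + 1 < n → z ≠ (lam j : ℂ)) →
      ∏ j ∈ Finset.range n, (z - (k j : ℂ)) = P z *
        (∑ j ∈ Finset.range (n - 1), (A j : ℂ) / (z - (lam j : ℂ)) +
          B / (z - β) + (starRingEnd ℂ) B / (z - (starRingEnd ℂ) β))) :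
    B = (∏ j ∈ Finset.range n, (β - (k j : ℂ))) /
        (2 * I * (β.im : ℂ) * ∏ j ∈ Finset.range (n - 1), (β - (lam j : ℂ))) ∧
    (∀ j, j + 1 < n → A j = (∏ i ∈ Finset.range n, (lam j - k i)) /
        ((∏ i ∈ (Finset.range (n - 1)).erase j, (lam j - lam i)) *
          ‖(lam j : ℂ) - β‖ ^ 2) ∧ A j < 0) := by
  have him : β.im ≠ 0 := ne_of_gt hβ
  have hβreal : ∀ x : ℝ, (x : ℂ) ≠ β := by
    intro x h
    have := congrArg Complex.im h
    simp at this
    exact him this.symm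
  have hβcreal : ∀ x : ℝ, (x : ℂ) ≠ (starRingEnd ℂ) β := by
    intro x h
    have := congrArg Complex.im h
    simp at this
    exact him (by linarith)
  have hββc : β ≠ (starRingEnd ℂ) β := by
    intro h
    have := congrArg Complex.im h
    simp at this
    exact him (by linarith)
  have hlammono : ∀ i j, i < j → j + 1 < n → lam i < lam j := by
    intro i j hij hjn
    have hi := hlam i (by omega)
    have hj := hlam j hjn
    have : k (i + 1) ≤ k j := by
      rcases eq_or_lt_of_le (Nat.succ_le_of_lt hij) with h | h
      · exact le_of_eq (congrArg k h)
      · exact le_of_lt (hk (i + 1) j h (by omega))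
    have := hi.2
    have := hj.1
    linarith
  -- the key polynomial identity, valid for all z by density
  have hkey : ∀ z : ℂ,
      (∏ j ∈ Finset.range n, (z - (k j : ℂ))) =
        (∑ j ∈ Finset.range (n - 1), (A j : ℂ) *
            ((z - β) * (z - (starRingEnd ℂ) β) *
              ∏ i ∈ (Finset.range (n - 1)).erase j, (z - (lam i : ℂ))))
          + B * ((z - (starRingEnd ℂ) β) * ∏ i ∈ Finset.range (n - 1), (z - (lam i : ℂ)))
          + (starRingEnd ℂ) B * ((z - β) * ∏ i ∈ Finset.range (n - 1), (z - (lam i : ℂ))) := by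
    have hfin : ({β, (starRingEnd ℂ) β} ∪
        (fun j : ℕ => (lam j : ℂ)) '' (Set.Iio (n - 1)) : Set ℂ).Finite :=
      (((Set.finite_singleton _).insert _)).union
        ((Set.finite_Iio _).image _)
    have hdense : Dense (({β, (starRingEnd ℂ) β} ∪
        (fun j : ℕ => (lam j : ℂ)) '' (Set.Iio (n - 1)) : Set ℂ)ᶜ) :=
      hfin.countable.dense_compl ℂ
    have hc1 : Continuous fun z : ℂ => ∏ j ∈ Finset.range n, (z - (k j : ℂ)) := by fun_prop
    have hc2 : Continuous fun z : ℂ =>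
        (∑ j ∈ Finset.range (n - 1), (A j : ℂ) *
            ((z - β) * (z - (starRingEnd ℂ) β) *
              ∏ i ∈ (Finset.range (n - 1)).erase j, (z - (lam i : ℂ))))
          + B * ((z - (starRingEnd ℂ) β) * ∏ i ∈ Finset.range (n - 1), (z - (lam i : ℂ)))
          + (starRingEnd ℂ) B * ((z - β) * ∏ i ∈ Finset.range (n - 1), (z - (lam i : ℂ))) := by
      fun_prop
    refine fun z => congrFun (Continuous.ext_on hdense hc1 hc2 ?_) z
    intro z hz
    simp only [Set.mem_compl_iff, Set.mem_union, Set.mem_insert_iff, Set.mem_singleton_iff,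
      Set.mem_image, Set.mem_Iio, not_or, not_exists] at hz
    obtain ⟨⟨hzb, hzc⟩, hzl⟩ := hz
    dsimp only
    have hzl' : ∀ j, j + 1 < n → z ≠ (lam j : ℂ) := by
      intro j hj h
      exact hzl j ⟨by omega, h.symm⟩
    rw [hPFD z hzb hzc hzl', mul_add, mul_add, Finset.mul_sum]
    congr 1
    congr 1
    · refine Finset.sum_congr rfl fun j hj => ?_
      have hjn : j + 1 < n := by
        have := Finset.mem_range.mp hj; omega
      have hzj : z - (lam j : ℂ) ≠ 0 := sub_ne_zero.mpr (hzl' j hjn)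
      rw [hfact z, ← Finset.prod_erase_mul _ _ hj]
      field_simp
    · have hzb' : z - β ≠ 0 := sub_ne_zero.mpr hzb
      rw [hfact z]
      field_simp
    · have hzc' : z - (starRingEnd ℂ) β ≠ 0 := sub_ne_zero.mpr hzc
      rw [hfact z]
      field_simp
  constructor
  · -- formula for B
    have hkβ := hkey β
    simp only [sub_self, zero_mul, mul_zero, zero_add, add_zero,
      Finset.sum_const_zero] at hkβ
    have hβl : ∀ i ∈ Finset.range (n - 1), β - (lam i : ℂ) ≠ 0 := by
      intro i _
      exact sub_ne_zero.mpr fun h => hβreal (lam i) h.symm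
    have hd : (2 * I * (β.im : ℂ) * ∏ j ∈ Finset.range (n - 1), (β - (lam j : ℂ))) ≠ 0 := by
      refine mul_ne_zero (mul_ne_zero (mul_ne_zero two_ne_zero I_ne_zero) ?_)
        (Finset.prod_ne_zero_iff.mpr hβl)
      exact_mod_cast him
    rw [eq_div_iff hd, hkβ, Complex.sub_conj]
    push_cast
    ring
  · intro j hjn
    have hjm : j ∈ Finset.range (n - 1) := Finset.mem_range.mpr (by omega)
    -- evaluate the key identity at lam j
    have hkl := hkey ((lam j : ℝ) : ℂ)
    have hsum : (∑ i ∈ Finset.range (n - 1), (A i : ℂ) *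
        (((lam j : ℂ) - β) * ((lam j : ℂ) - (starRingEnd ℂ) β) *
          ∏ i' ∈ (Finset.range (n - 1)).erase i, ((lam j : ℂ) - (lam i' : ℂ)))) =
        (A j : ℂ) * (((lam j : ℂ) - β) * ((lam j : ℂ) - (starRingEnd ℂ) β) *
          ∏ i' ∈ (Finset.range (n - 1)).erase j, ((lam j : ℂ) - (lam i' : ℂ))) := by
      refine Finset.sum_eq_single_of_mem j hjm fun i hi hij => ?_
      have : (∏ i' ∈ (Finset.range (n - 1)).erase i, ((lam j : ℂ) - (lam i' : ℂ))) = 0 :=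
        Finset.prod_eq_zero (Finset.mem_erase.mpr ⟨hij.symm, hjm⟩) (sub_self _)
      rw [this, mul_zero, mul_zero]
    have hzero : (∏ i ∈ Finset.range (n - 1), ((lam j : ℂ) - (lam i : ℂ))) = 0 :=
      Finset.prod_eq_zero hjm (sub_self _)
    simp only [hsum, hzero, mul_zero, add_zero] at hkl
    -- rewrite the quadratic factor as |lam j - β|^2
    have habs : ((lam j : ℂ) - β) * ((lam j : ℂ) - (starRingEnd ℂ) β) =
        ((‖(lam j : ℂ) - β‖ ^ 2 : ℝ) : ℂ) := by
      have h1 : ((lam j : ℂ) - (starRingEnd ℂ) β) = (starRingEnd ℂ) ((lam j : ℂ) - β) := by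
        simp [map_sub, Complex.conj_ofReal]
      rw [h1, Complex.mul_conj]
      norm_cast
      exact (Complex.sq_norm _).symm
    rw [habs] at hkl
    -- real version of the identity
    have hreal : (∏ i ∈ Finset.range n, (lam j - k i)) =
        A j * (‖(lam j : ℂ) - β‖ ^ 2 *
          ∏ i ∈ (Finset.range (n - 1)).erase j, (lam j - lam i)) := by
      have := hkl
      push_cast at this
      exact_mod_cast this
    set num := ∏ i ∈ Finset.range n, (lam j - k i) with hnumdef
    set D := ∏ i ∈ (Finset.range (n - 1)).erase j, (lam j - lam i) with hDdef
    set c := ‖(lam j : ℂ) - β‖ ^ 2 with hcdef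
    have hc : 0 < c := by
      have h0 : (lam j : ℂ) - β ≠ 0 := sub_ne_zero.mpr (hβreal (lam j))
      rw [hcdef]
      exact pow_pos (norm_pos_iff.mpr h0) 2
    -- sign analysis
    have hnum_split : num = (∏ i ∈ Finset.range (j + 1), (lam j - k i)) *
        ∏ i ∈ Finset.range (n - j - 1), (lam j - k (j + 1 + i)) := by
      have h := Finset.prod_range_add (fun i => lam j - k i) (j + 1) (n - j - 1)
      rw [show j + 1 + (n - j - 1) = n from by omega] at h
      rw [hnumdef, h]
    have hpos1 : 0 < ∏ i ∈ Finset.range (j + 1), (lam j - k i) := by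
      refine Finset.prod_pos fun i hi => ?_
      have hi' : i < j + 1 := Finset.mem_range.mp hi
      have h1 := (hlam j hjn).1
      rcases eq_or_lt_of_le (Nat.lt_succ_iff.mp hi') with h | h
      · rw [h] at *; linarith
      · have := hk i j h (by omega); linarith
    have hneg1 : ∀ i ∈ Finset.range (n - j - 1), 0 < k (j + 1 + i) - lam j := by
      intro i hi
      have hi' : i < n - j - 1 := Finset.mem_range.mp hi
      have h2 := (hlam j hjn).2
      rcases Nat.eq_zero_or_pos i with h | h
      · subst h; simpa using h2
      · have := hk (j + 1) (j + 1 + i) (by omega) (by omega); linarith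
    have hDsplit : (Finset.range (n - 1)).erase j =
        Finset.range j ∪ Finset.Ico (j + 1) (n - 1) := by
      ext i
      simp only [Finset.mem_erase, Finset.mem_range, Finset.mem_union, Finset.mem_Ico]
      omega
    have hdisj : Disjoint (Finset.range j) (Finset.Ico (j + 1) (n - 1)) := by
      rw [Finset.disjoint_left]
      intro i hi hi'
      have := Finset.mem_range.mp hi
      have := (Finset.mem_Ico.mp hi').1
      omega
    have hD_split : D = (∏ i ∈ Finset.range j, (lam j - lam i)) *
        ∏ i ∈ Finset.Ico (j + 1) (n - 1), (lam j - lam i) := by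
      rw [hDdef, hDsplit, Finset.prod_union hdisj]
    have hpos2 : 0 < ∏ i ∈ Finset.range j, (lam j - lam i) := by
      refine Finset.prod_pos fun i hi => ?_
      have := hlammono i j (Finset.mem_range.mp hi) hjn
      linarith
    have hneg2 : ∀ i ∈ Finset.Ico (j + 1) (n - 1), 0 < lam i - lam j := by
      intro i hi
      obtain ⟨h1, h2⟩ := Finset.mem_Ico.mp hi
      have := hlammono j i h1 (by omega)
      linarith
    have hnum_eq : num = (-1 : ℝ) ^ (n - j - 1) *
        ((∏ i ∈ Finset.range (j + 1), (lam j - k i)) *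
          ∏ i ∈ Finset.range (n - j - 1), (k (j + 1 + i) - lam j)) := by
      rw [hnum_split, prod_neg_sign (Finset.range (n - j - 1)) (fun i => lam j - k (j + 1 + i))]
      simp only [Finset.card_range, neg_sub]
      ring
    have hD_eq : D = (-1 : ℝ) ^ (n - j - 2) *
        ((∏ i ∈ Finset.range j, (lam j - lam i)) *
          ∏ i ∈ Finset.Ico (j + 1) (n - 1), (lam i - lam j)) := by
      rw [hD_split, prod_neg_sign (Finset.Ico (j + 1) (n - 1)) (fun i => lam j - lam i)]
      simp only [Nat.card_Ico, neg_sub]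
      have : n - 1 - (j + 1) = n - j - 2 := by omega
      rw [this]
      ring
    have hNpos1 : 0 < (∏ i ∈ Finset.range (j + 1), (lam j - k i)) *
        ∏ i ∈ Finset.range (n - j - 1), (k (j + 1 + i) - lam j) :=
      mul_pos hpos1 (Finset.prod_pos hneg1)
    have hNpos2 : 0 < (∏ i ∈ Finset.range j, (lam j - lam i)) *
        ∏ i ∈ Finset.Ico (j + 1) (n - 1), (lam i - lam j) :=
      mul_pos hpos2 (Finset.prod_pos hneg2)
    have hpow : (-1 : ℝ) ^ (n - j - 1) * (-1 : ℝ) ^ (n - j - 2) = -1 := by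
      rw [← pow_add]
      exact Odd.neg_one_pow ⟨n - j - 2, by omega⟩
    have hnumD : num * D < 0 := by
      have h : num * D = ((-1 : ℝ) ^ (n - j - 1) * (-1 : ℝ) ^ (n - j - 2)) *
          (((∏ i ∈ Finset.range (j + 1), (lam j - k i)) *
          ∏ i ∈ Finset.range (n - j - 1), (k (j + 1 + i) - lam j)) *
          ((∏ i ∈ Finset.range j, (lam j - lam i)) *
          ∏ i ∈ Finset.Ico (j + 1) (n - 1), (lam i - lam j))) := by
        rw [hnum_eq, hD_eq]
        ring
      rw [hpow] at h
      rw [h]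
      nlinarith [mul_pos hNpos1 hNpos2]
    have hD0 : D ≠ 0 := by
      intro h
      rw [h, mul_zero] at hnumD
      exact lt_irrefl 0 hnumD
    have hAval : A j = num / (D * c) := by
      rw [eq_div_iff (mul_ne_zero hD0 (ne_of_gt hc)), hreal]
      ring
    refine ⟨hAval, ?_⟩
    rw [hAval]
    rcases mul_neg_iff.mp hnumD with ⟨h1, h2⟩ | ⟨h1, h2⟩
    · exact div_neg_of_pos_of_neg h1 (mul_neg_of_neg_of_pos h2 hc)
    · exact div_neg_of_neg_of_pos h1 (mul_pos h2 hc)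
end

section
/- Suppose P has n+1 distinct real roots ρ₁ < ρ₂ < k₁ < λ₁ < ⋯ < λ_{n−1} < kₙ. Then in the decomposition ∏ⱼ(z−kⱼ) = P(z)(Σⱼ Aⱼ/(z−λⱼ) + B₁/(z−ρ₁) + B₂/(z−ρ₂)), one has B₁ = ∏ⱼ(ρ₁−kⱼ)/((ρ₁−ρ₂)∏ⱼ(ρ₁−λⱼ)) > 0, B₂ = ∏ⱼ(ρ₂−kⱼ)/((ρ₂−ρ₁)∏ⱼ(ρ₂−λⱼ)) < 0, Aⱼ < 0 for all j, and B₁ + B₂ + Σⱼ Aⱼ = 1. -/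
open Finset Polynomial

private lemma coeff_C_mul_monic {c : ℝ} {r : Polynomial ℝ} {d : ℕ} (hr : r.Monic)
    (hd : r.natDegree = d) : (Polynomial.C c * r).coeff d = c := by
  rw [Polynomial.coeff_C_mul, ← hd, hr.coeff_natDegree, mul_one]

/-- when P has n+1 distinct real roots ρ₁ < ρ₂ < k₁ < λ₁ < ⋯ < λ_{n−1} < kₙ,
the coefficients of the decomposition ∏ⱼ(x−kⱼ) = P(x)(Σⱼ Aⱼ/(x−λⱼ) + B₁/(x−ρ₁) + B₂/(x−ρ₂))
satisfy B₁ = ∏ⱼ(ρ₁−kⱼ)/((ρ₁−ρ₂)∏ⱼ(ρ₁−λⱼ)) > 0, B₂ = ∏ⱼ(ρ₂−kⱼ)/((ρ₂−ρ₁)∏ⱼ(ρ₂−λⱼ)) < 0,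
Aⱼ < 0 and B₁ + B₂ + ΣⱼAⱼ = 1. -/
theorem stmt_11 (n : ℕ) (hn : 0 < n) (k : ℕ → ℝ)
    (hk : ∀ i j, i < j → j < n → k i < k j)
    (b : ℕ → ℝ) (hb : ∀ j, j < n → 0 < b j)
    (P : ℝ → ℝ)
    (hP : ∀ x, P x = x * ∏ j ∈ Finset.range n, (x - k j) +
      ∑ j ∈ Finset.range n, 4 * b j * ∏ i ∈ (Finset.range n).erase j, (x - k i))
    (lam : ℕ → ℝ) (hlam : ∀ j, j + 1 < n → lam j ∈ Set.Ioo (k j) (k (j + 1)))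
    (ρ₁ ρ₂ : ℝ) (hρ : ρ₁ < ρ₂) (hρk : ρ₂ < k 0)
    (hfact : ∀ x : ℝ, P x =
      (x - ρ₁) * (x - ρ₂) * ∏ j ∈ Finset.range (n - 1), (x - lam j))
    (A : ℕ → ℝ) (B₁ B₂ : ℝ)
    (hPFD : ∀ x : ℝ, x ≠ ρ₁ → x ≠ ρ₂ → (∀ j, j + 1 < n → x ≠ lam j) →
      ∏ j ∈ Finset.range n, (x - k j) = P x *
        (∑ j ∈ Finset.range (n - 1), A j / (x - lam j) + B₁ / (x - ρ₁) + B₂ / (x - ρ₂))) :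
    (B₁ = (∏ j ∈ Finset.range n, (ρ₁ - k j)) /
        ((ρ₁ - ρ₂) * ∏ j ∈ Finset.range (n - 1), (ρ₁ - lam j)) ∧ 0 < B₁) ∧
    (B₂ = (∏ j ∈ Finset.range n, (ρ₂ - k j)) /
        ((ρ₂ - ρ₁) * ∏ j ∈ Finset.range (n - 1), (ρ₂ - lam j)) ∧ B₂ < 0) ∧
    (∀ j, j + 1 < n → A j < 0) ∧
    B₁ + B₂ + ∑ j ∈ Finset.range (n - 1), A j = 1 := by
  obtain ⟨m, rfl⟩ : ∃ m, n = m + 1 := ⟨n - 1, (Nat.succ_pred_eq_of_pos hn).symm⟩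
  simp only [Nat.add_sub_cancel] at hfact hPFD ⊢
  -- order facts
  have hkle : ∀ i j, i ≤ j → j < m + 1 → k i ≤ k j := by
    intro i j hij hj
    rcases hij.lt_or_eq with h | h
    · exact (hk i j h hj).le
    · rw [h]
  have hlam1 : ∀ j, j < m → k j < lam j := fun j hj => (hlam j (by omega)).1
  have hlam2 : ∀ j, j < m → lam j < k (j + 1) := fun j hj => (hlam j (by omega)).2
  have hρ₁k : ∀ j, j < m + 1 → ρ₁ < k j :=
    fun j hj => lt_of_lt_of_le (hρ.trans hρk) (hkle 0 j (Nat.zero_le _) hj)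
  have hρ₂k : ∀ j, j < m + 1 → ρ₂ < k j :=
    fun j hj => lt_of_lt_of_le hρk (hkle 0 j (Nat.zero_le _) hj)
  have hr1l : ∀ j, j < m → ρ₁ < lam j :=
    fun j hj => (hρ₁k j (by omega)).trans (hlam1 j hj)
  have hr2l : ∀ j, j < m → ρ₂ < lam j :=
    fun j hj => (hρ₂k j (by omega)).trans (hlam1 j hj)
  have hlmono : ∀ i j, i < j → j < m → lam i < lam j := by
    intro i j hij hj
    exact lt_of_lt_of_le (hlam2 i (by omega)) (le_trans (hkle (i + 1) j hij (by omega))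
      (hlam1 j hj).le)
  -- the polynomials
  set p : Polynomial ℝ := ∏ j ∈ range (m + 1), (X - C (k j)) with hp
  set q : Polynomial ℝ :=
      (∑ j ∈ range m, C (A j) *
        ((X - C ρ₁) * ((X - C ρ₂) * ∏ i ∈ (range m).erase j, (X - C (lam i))))) +
      C B₁ * ((X - C ρ₂) * ∏ j ∈ range m, (X - C (lam j))) +
      C B₂ * ((X - C ρ₁) * ∏ j ∈ range m, (X - C (lam j))) with hq
  have hevalp : ∀ x : ℝ, p.eval x = ∏ j ∈ range (m + 1), (x - k j) := by
    intro x; simp [hp, eval_prod]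
  have hevalq : ∀ x : ℝ, q.eval x =
      (∑ j ∈ range m, A j * ((x - ρ₁) * ((x - ρ₂) * ∏ i ∈ (range m).erase j, (x - lam i)))) +
      B₁ * ((x - ρ₂) * ∏ j ∈ range m, (x - lam j)) +
      B₂ * ((x - ρ₁) * ∏ j ∈ range m, (x - lam j)) := by
    intro x; simp [hq, eval_prod, eval_finset_sum]
  have hpq : p = q := by
    apply Polynomial.eq_of_infinite_eval_eq
    have hfin : (({ρ₁, ρ₂} ∪ (range m).image lam : Finset ℝ) : Set ℝ).Finite :=
      Finset.finite_toSet _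
    refine Set.Infinite.mono ?_ hfin.infinite_compl
    intro x hx
    simp only [Set.mem_compl_iff, Finset.coe_union, Set.mem_union, Finset.coe_insert,
      Set.mem_insert_iff, Finset.coe_image, Set.mem_image, Finset.mem_coe, Finset.mem_range,
      Finset.coe_singleton, Set.mem_singleton_iff, not_or, not_exists] at hx
    obtain ⟨⟨hx1, hx2⟩, hx3⟩ := hx
    have hx3' : ∀ j, j < m → x ≠ lam j := by
      intro j hj h
      exact hx3 j ⟨hj, h.symm⟩
    have hx' := hPFD x hx1 hx2 (fun j hj => hx3' j (by omega))
    show p.eval x = q.eval x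
    rw [hevalp, hevalq, hx', hfact, mul_add, mul_add, Finset.mul_sum]
    congr 1
    · congr 1
      · refine Finset.sum_congr rfl fun j hj => ?_
        rw [← Finset.mul_prod_erase _ _ hj]
        have h0 : x - lam j ≠ 0 := sub_ne_zero.mpr (hx3' j (mem_range.mp hj))
        field_simp
      · have h0 : x - ρ₁ ≠ 0 := sub_ne_zero.mpr hx1
        field_simp
    · have h0 : x - ρ₂ ≠ 0 := sub_ne_zero.mpr hx2
      field_simp
  -- formulas for B₁, B₂, A j by evaluation
  have hD₁ne : (ρ₁ - ρ₂) * ∏ j ∈ range m, (ρ₁ - lam j) ≠ 0 := by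
    refine mul_ne_zero (sub_ne_zero.mpr hρ.ne) (Finset.prod_ne_zero_iff.mpr fun j hj => ?_)
    exact sub_ne_zero.mpr (hr1l j (mem_range.mp hj)).ne
  have hD₂ne : (ρ₂ - ρ₁) * ∏ j ∈ range m, (ρ₂ - lam j) ≠ 0 := by
    refine mul_ne_zero (sub_ne_zero.mpr hρ.ne') (Finset.prod_ne_zero_iff.mpr fun j hj => ?_)
    exact sub_ne_zero.mpr (hr2l j (mem_range.mp hj)).ne
  have hB₁ : B₁ = (∏ j ∈ range (m + 1), (ρ₁ - k j)) /
      ((ρ₁ - ρ₂) * ∏ j ∈ range m, (ρ₁ - lam j)) := by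
    have h := congrArg (eval ρ₁) hpq
    rw [hevalp, hevalq] at h
    simp only [sub_self, zero_mul, mul_zero, Finset.sum_const_zero, zero_add, add_zero] at h
    rw [eq_div_iff hD₁ne]
    linear_combination -h
  have hB₂ : B₂ = (∏ j ∈ range (m + 1), (ρ₂ - k j)) /
      ((ρ₂ - ρ₁) * ∏ j ∈ range m, (ρ₂ - lam j)) := by
    have h := congrArg (eval ρ₂) hpq
    rw [hevalp, hevalq] at h
    simp only [sub_self, zero_mul, mul_zero, Finset.sum_const_zero, zero_add, add_zero] at h
    rw [eq_div_iff hD₂ne]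
    linear_combination -h
  have hAval : ∀ j, j < m → ∏ i ∈ range (m + 1), (lam j - k i) =
      A j * ((lam j - ρ₁) * ((lam j - ρ₂) * ∏ i ∈ (range m).erase j, (lam j - lam i))) := by
    intro j hj
    have h := congrArg (eval (lam j)) hpq
    rw [hevalp, hevalq] at h
    have h0 : ∏ i ∈ range m, (lam j - lam i) = 0 :=
      Finset.prod_eq_zero (mem_range.mpr hj) (sub_self _)
    have hsingle : (∑ i ∈ range m, A i *
        ((lam j - ρ₁) * ((lam j - ρ₂) * ∏ l ∈ (range m).erase i, (lam j - lam l)))) =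
        A j * ((lam j - ρ₁) * ((lam j - ρ₂) * ∏ l ∈ (range m).erase j, (lam j - lam l))) := by
      refine Finset.sum_eq_single_of_mem j (mem_range.mpr hj) fun i hi hij => ?_
      have hz : ∏ l ∈ (range m).erase i, (lam j - lam l) = 0 :=
        Finset.prod_eq_zero (Finset.mem_erase.mpr ⟨hij.symm, mem_range.mpr hj⟩) (sub_self _)
      rw [hz]; ring
    rw [hsingle, h0] at h
    rw [h]; ring
  -- positivity of B₁
  have hB₁pos : 0 < B₁ := by
    rw [hB₁]
    have heq : (∏ j ∈ range (m + 1), (ρ₁ - k j)) /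
        ((ρ₁ - ρ₂) * ∏ j ∈ range m, (ρ₁ - lam j)) =
        ((ρ₁ - k 0) / (ρ₁ - ρ₂)) * ∏ j ∈ range m, ((ρ₁ - k (j + 1)) / (ρ₁ - lam j)) := by
      rw [Finset.prod_range_succ', Finset.prod_div_distrib, div_mul_div_comm]
      ring
    rw [heq]
    refine mul_pos (div_pos_of_neg_of_neg (sub_neg.mpr (hρ₁k 0 (by omega))) (sub_neg.mpr hρ))
      (Finset.prod_pos fun j hj => ?_)
    exact div_pos_of_neg_of_neg (sub_neg.mpr (hρ₁k (j + 1) (by simpa using hj)))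
      (sub_neg.mpr (hr1l j (mem_range.mp hj)))
  have hB₂neg : B₂ < 0 := by
    rw [hB₂]
    have heq : (∏ j ∈ range (m + 1), (ρ₂ - k j)) /
        ((ρ₂ - ρ₁) * ∏ j ∈ range m, (ρ₂ - lam j)) =
        ((ρ₂ - k 0) / (ρ₂ - ρ₁)) * ∏ j ∈ range m, ((ρ₂ - k (j + 1)) / (ρ₂ - lam j)) := by
      rw [Finset.prod_range_succ', Finset.prod_div_distrib, div_mul_div_comm]
      ring
    rw [heq]
    refine mul_neg_of_neg_of_pos
      (div_neg_of_neg_of_pos (sub_neg.mpr (hρ₂k 0 (by omega))) (sub_pos.mpr hρ))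
      (Finset.prod_pos fun j hj => ?_)
    exact div_pos_of_neg_of_neg (sub_neg.mpr (hρ₂k (j + 1) (by simpa using hj)))
      (sub_neg.mpr (hr2l j (mem_range.mp hj)))
  -- negativity of A j
  have hAneg : ∀ j, j + 1 < m + 1 → A j < 0 := by
    intro j hj'
    have hj : j < m := by omega
    have hDpos : 0 < (lam j - ρ₁) * (lam j - ρ₂) * ∏ i ∈ range j, (lam j - lam i) := by
      refine mul_pos (mul_pos (sub_pos.mpr (hr1l j hj)) (sub_pos.mpr (hr2l j hj)))
        (Finset.prod_pos fun i hi => sub_pos.mpr (hlmono i j (mem_range.mp hi) hj))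
    have hDne : (lam j - ρ₁) * ((lam j - ρ₂) * ∏ i ∈ (range m).erase j, (lam j - lam i)) ≠ 0 := by
      refine mul_ne_zero (sub_ne_zero.mpr (hr1l j hj).ne')
        (mul_ne_zero (sub_ne_zero.mpr (hr2l j hj).ne')
          (Finset.prod_ne_zero_iff.mpr fun i hi => ?_))
      obtain ⟨hij, hi⟩ := Finset.mem_erase.mp hi
      rcases lt_or_gt_of_ne hij with h | h
      · exact sub_ne_zero.mpr (hlmono i j h hj).ne'
      · exact sub_ne_zero.mpr (hlmono j i h (mem_range.mp hi)).ne
    have hA : A j = (∏ i ∈ range (m + 1), (lam j - k i)) /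
        ((lam j - ρ₁) * ((lam j - ρ₂) * ∏ i ∈ (range m).erase j, (lam j - lam i))) := by
      rw [eq_div_iff hDne]
      exact (hAval j hj).symm
    have herase : ∏ i ∈ (range m).erase j, (lam j - lam i) =
        (∏ i ∈ range j, (lam j - lam i)) * ∏ i ∈ Ico (j + 1) m, (lam j - lam i) := by
      rw [← Finset.prod_union (Finset.disjoint_left.mpr fun a ha hb => by
        simp only [Finset.mem_range] at ha
        simp only [Finset.mem_Ico] at hb
        omega)]
      apply Finset.prod_congr _ fun _ _ => rfl
      ext a
      simp only [Finset.mem_erase, Finset.mem_range, Finset.mem_union, Finset.mem_Ico]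
      omega
    have hsplitN : ∏ i ∈ range (m + 1), (lam j - k i) =
        (∏ i ∈ range (j + 1), (lam j - k i)) *
          ((∏ i ∈ Ico (j + 1) m, (lam j - k i)) * (lam j - k m)) := by
      rw [← Finset.prod_range_mul_prod_Ico _ (by omega : j + 1 ≤ m + 1),
        Finset.prod_Ico_succ_top (by omega : j + 1 ≤ m)]
    have hA2 : A j = (lam j - k m) *
        (((∏ i ∈ range (j + 1), (lam j - k i)) /
            ((lam j - ρ₁) * (lam j - ρ₂) * ∏ i ∈ range j, (lam j - lam i))) *
          ∏ i ∈ Ico (j + 1) m, ((lam j - k i) / (lam j - lam i))) := by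
      have h1 : lam j - ρ₁ ≠ 0 := sub_ne_zero.mpr (hr1l j hj).ne'
      have h2 : lam j - ρ₂ ≠ 0 := sub_ne_zero.mpr (hr2l j hj).ne'
      have h3 : ∏ i ∈ range j, (lam j - lam i) ≠ 0 :=
        Finset.prod_ne_zero_iff.mpr fun i hi =>
          sub_ne_zero.mpr (hlmono i j (mem_range.mp hi) hj).ne'
      have h4 : ∏ i ∈ Ico (j + 1) m, (lam j - lam i) ≠ 0 :=
        Finset.prod_ne_zero_iff.mpr fun i hi =>
          sub_ne_zero.mpr (hlmono j i (mem_Ico.mp hi).1 (mem_Ico.mp hi).2).ne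
      rw [hA, hsplitN, herase, Finset.prod_div_distrib]
      field_simp
    rw [hA2]
    refine mul_neg_of_neg_of_pos
      (sub_neg.mpr (lt_of_lt_of_le (hlam2 j hj) (hkle (j + 1) m (by omega) (by omega))))
      (mul_pos (div_pos (Finset.prod_pos fun i hi => ?_) hDpos)
        (Finset.prod_pos fun i hi => ?_))
    · have hi' : i < j + 1 := mem_range.mp hi
      exact sub_pos.mpr (lt_of_le_of_lt (hkle i j (by omega) (by omega)) (hlam1 j hj))
    · obtain ⟨h1, h2⟩ := Finset.mem_Ico.mp hi
      exact div_pos_of_neg_of_neg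
        (sub_neg.mpr (lt_of_lt_of_le (hlam2 j hj) (hkle (j + 1) i h1 (by omega))))
        (sub_neg.mpr (hlmono j i h1 h2))
  -- the sum identity via leading coefficients
  have hsum : B₁ + B₂ + ∑ j ∈ range m, A j = 1 := by
    have hc := congrArg (fun r : Polynomial ℝ => r.coeff (m + 1)) hpq
    have hmon : ∀ (c : ℝ) (i : ℕ), i < m → False ∨ True := fun _ _ _ => Or.inr trivial
    have hmonl : (∏ i ∈ range m, (X - C (lam i)) : Polynomial ℝ).Monic :=
      monic_prod_of_monic _ _ fun i _ => monic_X_sub_C _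
    have hdegl : (∏ i ∈ range m, (X - C (lam i)) : Polynomial ℝ).natDegree = m := by
      rw [natDegree_prod_of_monic _ _ fun i _ => monic_X_sub_C _]
      simp [natDegree_X_sub_C]
    have hpcoeff : p.coeff (m + 1) = 1 := by
      have hmonp : p.Monic := monic_prod_of_monic _ _ fun i _ => monic_X_sub_C _
      have hdegp : p.natDegree = m + 1 := by
        rw [hp, natDegree_prod_of_monic _ _ fun i _ => monic_X_sub_C _]
        simp [natDegree_X_sub_C]
      rw [← hdegp]
      exact hmonp.coeff_natDegree
    have hqcoeff : q.coeff (m + 1) = (∑ j ∈ range m, A j) + B₁ + B₂ := by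
      rw [hq, coeff_add, coeff_add, finset_sum_coeff]
      congr 1
      congr 1
      · refine Finset.sum_congr rfl fun j hj => ?_
        have hj' : j < m := mem_range.mp hj
        have hmone : (∏ i ∈ (range m).erase j, (X - C (lam i)) : Polynomial ℝ).Monic :=
          monic_prod_of_monic _ _ fun i _ => monic_X_sub_C _
        have hdege : (∏ i ∈ (range m).erase j, (X - C (lam i)) : Polynomial ℝ).natDegree
            = m - 1 := by
          rw [natDegree_prod_of_monic _ _ fun i _ => monic_X_sub_C _]
          simp [natDegree_X_sub_C, Finset.card_erase_of_mem (mem_range.mpr hj')]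
        refine coeff_C_mul_monic ((monic_X_sub_C _).mul ((monic_X_sub_C _).mul hmone)) ?_
        rw [(monic_X_sub_C ρ₁).natDegree_mul ((monic_X_sub_C ρ₂).mul hmone),
          (monic_X_sub_C ρ₂).natDegree_mul hmone, natDegree_X_sub_C, natDegree_X_sub_C, hdege]
        omega
      · refine coeff_C_mul_monic ((monic_X_sub_C _).mul hmonl) ?_
        rw [(monic_X_sub_C ρ₂).natDegree_mul hmonl, natDegree_X_sub_C, hdegl]
        omega
      · refine coeff_C_mul_monic ((monic_X_sub_C _).mul hmonl) ?_
        rw [(monic_X_sub_C ρ₁).natDegree_mul hmonl, natDegree_X_sub_C, hdegl]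
        omega
    rw [hpcoeff, hqcoeff] at hc
    linarith
  exact ⟨⟨hB₁, hB₁pos⟩, ⟨hB₂, hB₂neg⟩, hAneg, hsum⟩
end

section
/- Let ρ₁ < ρ₂ be real, λ₁,…,λ_{n−1} real distinct from ρ₁, ρ₂, and let b > 0, a₁,…,a_{n−1} > 0 with −1 + b + Σⱼaⱼ < 0. Define h(z) = (z−ρ₂)^b ∏ⱼ(z−λⱼ)^{aⱼ} / (z−ρ₁) on ℍ. If T(z) = (z−ρ₂)/(z−ρ₁), then h∘T^{−1}(z) = C·(z−1)^{1/B₁}·z^b·∏ⱼ(z−T(λⱼ))^{aⱼ} for a nonzero constant C, where 1/B₁ = 1 − b − Σⱼaⱼ; in particular h∘T^{−1} has the form of a Schwarz–Christoffel integrand's antiderivative and h is univalent on ℍ. -/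
open Complex

private lemma ne_zero_of_im_pos' {z : ℂ} (hz : 0 < z.im) : z ≠ 0 := by
  intro h; rw [h] at hz; simp at hz

private lemma arg_pos_of_im_pos' {z : ℂ} (hz : 0 < z.im) : 0 < z.arg := by
  rcases (arg_nonneg_iff.2 hz.le).lt_or_eq with h | h
  · exact h
  · exact absurd (arg_eq_zero_iff.mp h.symm).2 hz.ne'

private lemma arg_lt_pi_of_im_pos' {z : ℂ} (hz : 0 < z.im) : z.arg < Real.pi :=
  arg_lt_pi_iff.2 (Or.inr hz.ne')

private lemma log_div_of_im_pos' {x y : ℂ} (hx : 0 < x.im) (hy : 0 < y.im) :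
    log (x / y) = log x - log y := by
  have hx0 : x ≠ 0 := ne_zero_of_im_pos' hx
  have hy0 : y ≠ 0 := ne_zero_of_im_pos' hy
  have harg : x.arg + (y⁻¹).arg ∈ Set.Ioc (-Real.pi) Real.pi := by
    rw [arg_inv, if_neg (arg_lt_pi_of_im_pos' hy).ne]
    constructor
    · have := arg_lt_pi_of_im_pos' hy
      have := arg_pos_of_im_pos' hx
      linarith
    · have := arg_lt_pi_of_im_pos' hx
      have := arg_pos_of_im_pos' hy
      linarith
  rw [div_eq_mul_inv, log_mul hx0 (inv_ne_zero hy0) harg,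
    log_inv _ (arg_lt_pi_of_im_pos' hy).ne, sub_eq_add_neg]

private lemma log_neg_of_im_neg' {x : ℂ} (hx : x.im < 0) :
    log (-x) = log x + ↑Real.pi * I := by
  have hx0 : x ≠ 0 := by intro h; rw [h] at hx; simp at hx
  apply Complex.ext
  · simp [log_re]
  · simp [log_im, arg_neg_eq_arg_add_pi_of_im_neg hx]

private lemma cpow_scale_pos {r : ℝ} (hr : 0 < r) {x y : ℂ} (hx : 0 < x.im) (hy : 0 < y.im)
    (a : ℝ) : ((r : ℂ) * x / y) ^ (a : ℂ) =
      Complex.exp ((Real.log r : ℂ) * a + (a : ℂ) * (log x - log y)) := by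
  have hx0 : x ≠ 0 := ne_zero_of_im_pos' hx
  have hy0 : y ≠ 0 := ne_zero_of_im_pos' hy
  have hq : x / y ≠ 0 := div_ne_zero hx0 hy0
  have hr0 : (r : ℂ) ≠ 0 := by exact_mod_cast hr.ne'
  rw [mul_div_assoc, cpow_def_of_ne_zero (mul_ne_zero hr0 hq),
    log_ofReal_mul hr hq, log_div_of_im_pos' hx hy]
  ring_nf

private lemma cpow_scale_neg {r : ℝ} (hr : r < 0) {x y : ℂ} (hx : 0 < x.im) (hy : 0 < y.im)
    (hq : (x / y).im < 0) (a : ℝ) : ((r : ℂ) * x / y) ^ (a : ℂ) =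
      Complex.exp ((Real.log (-r) : ℂ) * a + ↑Real.pi * I * a + (a : ℂ) * (log x - log y)) := by
  have hx0 : x ≠ 0 := ne_zero_of_im_pos' hx
  have hy0 : y ≠ 0 := ne_zero_of_im_pos' hy
  have hq0 : x / y ≠ 0 := div_ne_zero hx0 hy0
  have h1 : (r : ℂ) * x / y = ((-r : ℝ) : ℂ) * (-(x / y)) := by
    push_cast; ring
  have hr0 : ((-r : ℝ) : ℂ) ≠ 0 := by
    simp only [ne_eq, ofReal_eq_zero]; linarith
  rw [h1, cpow_def_of_ne_zero (mul_ne_zero hr0 (neg_ne_zero.2 hq0)),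
    log_ofReal_mul (by linarith : 0 < -r) (neg_ne_zero.2 hq0),
    log_neg_of_im_neg' hq, log_div_of_im_pos' hx hy]
  ring_nf


private lemma injOn_sum_log (M : ℕ) (c : ℕ → ℝ) (x : ℕ → ℝ)
    (hc : ∀ j ∈ Finset.range M, 0 ≤ c j) (hex : ∃ j ∈ Finset.range M, 0 < c j) :
    Set.InjOn (fun ω : ℂ => ∑ j ∈ Finset.range M, (c j : ℂ) * Complex.log (ω - x j))
      {z : ℂ | 0 < z.im} := by
  set ψ : ℂ → ℂ := fun ω : ℂ => ∑ j ∈ Finset.range M, (c j : ℂ) * Complex.log (ω - x j)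
    with hψdef
  intro ω₁ h₁ ω₂ h₂ heq
  by_contra hne
  simp only [Set.mem_setOf_eq] at h₁ h₂
  set Δ : ℂ := ω₂ - ω₁ with hΔ
  have hΔ0 : Δ ≠ 0 := sub_ne_zero.2 (Ne.symm hne)
  set γ : ℝ → ℂ := fun t => ω₁ + (t : ℂ) * Δ with hγ
  have hγim : ∀ t ∈ Set.Icc (0:ℝ) 1, 0 < (γ t).im := by
    intro t ht
    have h3 : (γ t).im = (1 - t) * ω₁.im + t * ω₂.im := by
      simp [hγ, hΔ]; ring
    rw [h3]
    rcases lt_or_ge 0 t with h4 | h4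
    · have := mul_nonneg (by linarith [ht.2] : (0:ℝ) ≤ 1 - t) h₁.le
      nlinarith [mul_pos h4 h₂]
    · have ht0 : t = 0 := le_antisymm h4 ht.1
      rw [ht0]; simpa using h₁
  have hγcont : Continuous γ := by fun_prop
  have hγd : ∀ t : ℝ, HasDerivAt γ Δ t := by
    intro t
    simpa [hγ] using ((Complex.ofRealCLM.hasDerivAt (x := t)).mul_const Δ).const_add ω₁
  set D : ℂ → ℂ := fun ω => ∑ j ∈ Finset.range M, (c j : ℂ) * (ω - x j)⁻¹ with hD
  have hfd : ∀ t ∈ Set.uIcc (0:ℝ) 1, HasDerivAt (fun s => ψ (γ s)) (Δ * D (γ t)) t := by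
    intro t ht
    rw [Set.uIcc_of_le (by norm_num : (0:ℝ) ≤ 1)] at ht
    have hterm : ∀ j ∈ Finset.range M,
        HasDerivAt (fun s : ℝ => (c j : ℂ) * Complex.log (γ s - x j))
          ((c j : ℂ) * (Δ / (γ t - x j))) t := by
      intro j _
      have hmem : γ t - x j ∈ Complex.slitPlane := by
        refine Or.inr ?_
        have := hγim t ht
        simp only [sub_im, ofReal_im, sub_zero]
        linarith
      exact (((hγd t).sub_const _).clog_real hmem).const_mul _
    have hsum : HasDerivAt (fun s => ψ (γ s))
        (∑ i ∈ Finset.range M, (c i : ℂ) * (Δ / (γ t - x i))) t := HasDerivAt.fun_sum hterm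
    convert hsum using 1
    rw [hD, Finset.mul_sum]
    exact Finset.sum_congr rfl fun j _ => by ring
  have hcont : ContinuousOn (fun t => D (γ t)) (Set.Icc (0:ℝ) 1) := by
    apply continuousOn_finset_sum
    intro j _
    refine ContinuousOn.mul continuousOn_const ?_
    refine ContinuousOn.inv₀ ((hγcont.sub continuous_const).continuousOn) ?_
    intro t ht
    intro hzero
    have := hγim t ht
    rw [sub_eq_zero] at hzero
    rw [hzero] at this
    simp at this
  have hintD : IntervalIntegrable (fun t => D (γ t)) MeasureTheory.volume 0 1 := by
    apply ContinuousOn.intervalIntegrable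
    rwa [Set.uIcc_of_le (by norm_num : (0:ℝ) ≤ 1)]
  have hint : IntervalIntegrable (fun t => Δ * D (γ t)) MeasureTheory.volume 0 1 := by
    apply ContinuousOn.intervalIntegrable
    rw [Set.uIcc_of_le (by norm_num : (0:ℝ) ≤ 1)]
    exact continuousOn_const.mul hcont
  have key := intervalIntegral.integral_eq_sub_of_hasDerivAt hfd hint
  have hγ0 : γ 0 = ω₁ := by simp [hγ]
  have hγ1 : γ 1 = ω₂ := by simp [hγ, hΔ]
  rw [hγ0, hγ1, ← heq, sub_self, intervalIntegral.integral_const_mul] at key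
  have hI : (∫ t in (0:ℝ)..1, D (γ t)) = 0 := by
    rcases mul_eq_zero.mp key with h | h
    · exact absurd h hΔ0
    · exact h
  have him : (∫ t in (0:ℝ)..1, (D (γ t)).im) = 0 := by
    have := ContinuousLinearMap.intervalIntegral_comp_comm Complex.imCLM hintD
    simp only [imCLM_apply] at this
    rw [this, hI]
    simp
  have hDneg : ∀ t ∈ Set.Icc (0:ℝ) 1, (D (γ t)).im < 0 := by
    intro t ht
    have himω := hγim t ht
    have himsub : ∀ j : ℕ, ((γ t - (x j : ℂ))⁻¹).im < 0 := by
      intro j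
      rw [Complex.inv_im]
      have h5 : (γ t - (x j : ℂ)).im = (γ t).im := by simp
      have h6 : γ t - (x j : ℂ) ≠ 0 := by
        intro h0; rw [h0] at h5; simp at h5; rw [← h5] at himω; exact lt_irrefl _ himω
      have h7 : 0 < Complex.normSq (γ t - (x j : ℂ)) := Complex.normSq_pos.2 h6
      rw [h5]
      exact div_neg_of_neg_of_pos (by linarith) h7
    have h8 : (D (γ t)).im = ∑ j ∈ Finset.range M, c j * ((γ t - (x j : ℂ))⁻¹).im := by
      rw [hD, Complex.im_sum]
      exact Finset.sum_congr rfl fun j _ => Complex.im_ofReal_mul _ _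
    rw [h8]
    have h9 : ∑ j ∈ Finset.range M, (0:ℝ) = 0 := Finset.sum_const_zero
    calc ∑ j ∈ Finset.range M, c j * ((γ t - (x j : ℂ))⁻¹).im
        < ∑ j ∈ Finset.range M, (0:ℝ) := by
          obtain ⟨j₀, hj₀, hcj₀⟩ := hex
          refine Finset.sum_lt_sum (fun j hj => ?_) ⟨j₀, hj₀, ?_⟩
          · exact mul_nonpos_of_nonneg_of_nonpos (hc j hj) (himsub j).le
          · exact mul_neg_of_pos_of_neg hcj₀ (himsub j₀)
      _ = 0 := h9
  have hpos : 0 < ∫ t in (0:ℝ)..1, -(D (γ t)).im := by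
    apply intervalIntegral.integral_pos one_pos
    · exact (Complex.continuous_im.comp_continuousOn hcont).neg
    · intro t ht
      exact neg_nonneg.2 (hDneg t ⟨ht.1.le, ht.2⟩).le
    · exact ⟨0, Set.left_mem_Icc.2 zero_le_one,
        neg_pos.2 (hDneg 0 (Set.left_mem_Icc.2 zero_le_one))⟩
  rw [intervalIntegral.integral_neg] at hpos
  rw [him] at hpos
  simp at hpos

private lemma im_sum_log_bounds (M : ℕ) (c : ℕ → ℝ) (x : ℕ → ℝ)
    (hc : ∀ j ∈ Finset.range M, 0 ≤ c j) (hex : ∃ j ∈ Finset.range M, 0 < c j)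
    (hsum : ∑ j ∈ Finset.range M, c j ≤ 1) {ω : ℂ} (hω : 0 < ω.im) :
    0 < (∑ j ∈ Finset.range M, (c j : ℂ) * Complex.log (ω - x j)).im ∧
      (∑ j ∈ Finset.range M, (c j : ℂ) * Complex.log (ω - x j)).im < Real.pi := by
  have him : ∀ j : ℕ, 0 < (ω - (x j : ℂ)).im := by
    intro j; simpa using hω
  have hrw : (∑ j ∈ Finset.range M, (c j : ℂ) * Complex.log (ω - x j)).im
      = ∑ j ∈ Finset.range M, c j * (ω - (x j : ℂ)).arg := by
    rw [Complex.im_sum]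
    exact Finset.sum_congr rfl fun j _ => by
      rw [Complex.im_ofReal_mul, Complex.log_im]
  rw [hrw]
  obtain ⟨j₀, hj₀, hcj₀⟩ := hex
  constructor
  · apply Finset.sum_pos'
    · exact fun j hj => mul_nonneg (hc j hj) (arg_pos_of_im_pos' (him j)).le
    · exact ⟨j₀, hj₀, mul_pos hcj₀ (arg_pos_of_im_pos' (him j₀))⟩
  · have h1 : ∑ j ∈ Finset.range M, c j * (ω - (x j : ℂ)).arg
        < ∑ j ∈ Finset.range M, c j * Real.pi := by
      refine Finset.sum_lt_sum (fun j hj => ?_) ⟨j₀, hj₀, ?_⟩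
      · exact mul_le_mul_of_nonneg_left (arg_lt_pi_of_im_pos' (him j)).le (hc j hj)
      · exact mul_lt_mul_of_pos_left (arg_lt_pi_of_im_pos' (him j₀)) hcj₀
    have h2 : ∑ j ∈ Finset.range M, c j * Real.pi ≤ Real.pi := by
      rw [← Finset.sum_mul]
      nlinarith [Real.pi_pos]
    linarith

private lemma div_shift_im (w : ℂ) (hw : w ≠ 0) (e : ℝ) :
    ((w + (e : ℂ)) / w).im = e * (-w.im / Complex.normSq w) := by
  rw [add_div, div_self hw, div_eq_mul_inv, add_im, Complex.one_im,
    Complex.im_ofReal_mul, Complex.inv_im]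
  ring

/-- with h(z) = (z−ρ₂)^b∏ⱼ(z−λⱼ)^{aⱼ}/(z−ρ₁) and T(z) = (z−ρ₂)/(z−ρ₁),
one has h(z) = C·(T z − 1)^{1/B₁}·(T z)^b·∏ⱼ(T z − T λⱼ)^{aⱼ} on ℍ for a nonzero constant C,
where 1/B₁ = 1 − b − Σⱼaⱼ; in particular h∘T⁻¹ is a Schwarz–Christoffel map and h is
univalent on ℍ. -/
theorem stmt_12 (n : ℕ) (ρ₁ ρ₂ : ℝ) (hρ : ρ₁ < ρ₂)
    (lam : ℕ → ℝ) (hlam : ∀ j, j + 1 < n → lam j ≠ ρ₁ ∧ lam j ≠ ρ₂)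
    (b : ℝ) (hb : 0 < b) (aj : ℕ → ℝ) (haj : ∀ j, j + 1 < n → 0 < aj j)
    (hsum : -1 + b + ∑ j ∈ Finset.range (n - 1), aj j < 0)
    (B₁ : ℝ) (hB₁ : 1 / B₁ = 1 - b - ∑ j ∈ Finset.range (n - 1), aj j)
    (h : ℂ → ℂ)
    (hh : ∀ z : ℂ, h z = (z - (ρ₂ : ℂ)) ^ (b : ℂ) *
      (∏ j ∈ Finset.range (n - 1), (z - (lam j : ℂ)) ^ (aj j : ℂ)) / (z - (ρ₁ : ℂ)))
    (T : ℂ → ℂ) (hT : ∀ z : ℂ, T z = (z - (ρ₂ : ℂ)) / (z - (ρ₁ : ℂ))) :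
    (∃ C : ℂ, C ≠ 0 ∧ ∀ z : ℂ, 0 < z.im →
      h z = C * (T z - 1) ^ ((1 / B₁ : ℝ) : ℂ) * T z ^ (b : ℂ) *
        ∏ j ∈ Finset.range (n - 1), (T z - T (lam j : ℂ)) ^ (aj j : ℂ)) ∧
    Set.InjOn h {z : ℂ | 0 < z.im} := by
  have hd : (0:ℝ) < ρ₂ - ρ₁ := sub_pos.2 hρ
  set m := n - 1 with hmdef
  have hajm : ∀ j ∈ Finset.range m, 0 < aj j := by
    intro j hj; exact haj j (by have := Finset.mem_range.mp hj; omega)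
  have hlamm : ∀ j ∈ Finset.range m, lam j ≠ ρ₁ ∧ lam j ≠ ρ₂ := by
    intro j hj; exact hlam j (by have := Finset.mem_range.mp hj; omega)
  have hS : 1 / B₁ = 1 - b - ∑ j ∈ Finset.range m, aj j := hB₁
  have hSpos : 0 < 1 / B₁ := by rw [hS]; linarith
  have hsubim : ∀ (z : ℂ) (e : ℝ), 0 < z.im → 0 < (z - (e:ℂ)).im := by
    intro z e hz; simpa using hz
  have hTim : ∀ z : ℂ, 0 < z.im → 0 < (T z).im := by
    intro z hz
    have hw0 : z - (ρ₁:ℂ) ≠ 0 := ne_zero_of_im_pos' (hsubim z ρ₁ hz)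
    have hre : z - (ρ₂:ℂ) = (z - (ρ₁:ℂ)) + ((ρ₁ - ρ₂ : ℝ):ℂ) := by push_cast; ring
    rw [hT, hre, div_shift_im _ hw0]
    have h1 : (z - (ρ₁:ℂ)).im = z.im := by simp
    rw [h1]
    have h2 : 0 < Complex.normSq (z - (ρ₁:ℂ)) := Complex.normSq_pos.2 hw0
    have h4 : (ρ₁ - ρ₂) * (-z.im / Complex.normSq (z - (ρ₁:ℂ)))
        = (ρ₂ - ρ₁) * (z.im / Complex.normSq (z - (ρ₁:ℂ))) := by ring
    rw [h4]
    exact mul_pos hd (div_pos hz h2)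
  have hTlam : ∀ j : ℕ, T ((lam j : ℝ):ℂ) = (((lam j - ρ₂)/(lam j - ρ₁) : ℝ) : ℂ) := by
    intro j; rw [hT]; push_cast; ring
  set κ : ℕ → ℂ := fun j => (Real.log ((ρ₂ - ρ₁) / |lam j - ρ₁|) : ℂ) * (aj j : ℂ) +
      (if lam j < ρ₁ then (Real.pi : ℂ) * I * (aj j : ℂ) else 0) with hκdef
  set c8 : ℂ := (Real.log (ρ₂ - ρ₁) : ℂ) * ((1/B₁ : ℝ):ℂ) +
      (Real.pi : ℂ) * I * ((1/B₁ : ℝ):ℂ) + ∑ j ∈ Finset.range m, κ j with hc8def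
  have hmain : ∀ z : ℂ, 0 < z.im →
      h z = Complex.exp (-c8) * (T z - 1) ^ ((1 / B₁ : ℝ) : ℂ) * T z ^ (b : ℂ) *
        ∏ j ∈ Finset.range m, (T z - T (lam j : ℂ)) ^ (aj j : ℂ) := by
    intro z hz
    have hwim := hsubim z ρ₁ hz
    have huim := hsubim z ρ₂ hz
    have hw0 : z - (ρ₁:ℂ) ≠ 0 := ne_zero_of_im_pos' hwim
    have hu0 : z - (ρ₂:ℂ) ≠ 0 := ne_zero_of_im_pos' huim
    have hA1 : (T z - 1) ^ ((1 / B₁ : ℝ) : ℂ) =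
        Complex.exp ((Real.log (ρ₂ - ρ₁) : ℂ) * ((1/B₁ : ℝ):ℂ) +
          (Real.pi : ℂ) * I * ((1/B₁:ℝ):ℂ) - ((1/B₁:ℝ):ℂ) * Complex.log (z - ρ₁)) := by
      have hbase : T z - 1 = ((ρ₂ - ρ₁ : ℝ) : ℂ) * (-(z - (ρ₁:ℂ))⁻¹) := by
        rw [hT]; push_cast; field_simp; ring
      have hq0 : (-(z - (ρ₁:ℂ))⁻¹) ≠ 0 := by simpa using hw0
      have hqim : ((z - (ρ₁:ℂ))⁻¹).im < 0 := by
        rw [Complex.inv_im]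
        refine div_neg_of_neg_of_pos ?_ (Complex.normSq_pos.2 hw0)
        simp only [sub_im, ofReal_im, sub_zero]; linarith
      rw [hbase, cpow_def_of_ne_zero (mul_ne_zero (by exact_mod_cast hd.ne') hq0),
        log_ofReal_mul hd hq0, log_neg_of_im_neg' hqim,
        Complex.log_inv _ (arg_lt_pi_of_im_pos' hwim).ne]
      congr 1; ring
    have hA2 : T z ^ (b:ℂ) =
        Complex.exp ((b:ℂ) * (Complex.log (z - ρ₂) - Complex.log (z - ρ₁))) := by
      rw [hT, cpow_def_of_ne_zero (div_ne_zero hu0 hw0), log_div_of_im_pos' huim hwim,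
        mul_comm]
    have hA3 : ∀ j ∈ Finset.range m, (T z - T ((lam j : ℝ):ℂ)) ^ ((aj j : ℝ):ℂ) =
        Complex.exp (κ j + ((aj j:ℝ):ℂ) *
          (Complex.log (z - lam j) - Complex.log (z - ρ₁))) := by
      intro j hj
      have hvim := hsubim z (lam j) hz
      have hc0 : lam j - ρ₁ ≠ 0 := sub_ne_zero.2 (hlamm j hj).1
      have hc0'' : ((lam j:ℝ):ℂ) - (ρ₁:ℂ) ≠ 0 := by
        intro h0
        apply hc0
        have h00 := congrArg Complex.re h0
        simpa using h00
      have hbase : T z - T ((lam j:ℝ):ℂ) =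
          (((ρ₂ - ρ₁)/(lam j - ρ₁) : ℝ):ℂ) * (z - (lam j:ℂ)) / (z - (ρ₁:ℂ)) := by
        rw [hT, hT]; push_cast; field_simp; ring
      rcases hc0.lt_or_gt with hneg | hpos
      · have hr : (ρ₂ - ρ₁)/(lam j - ρ₁) < 0 := div_neg_of_pos_of_neg hd hneg
        have hqim : ((z - (lam j:ℂ)) / (z - (ρ₁:ℂ))).im < 0 := by
          have hre : z - (lam j:ℂ) = (z - (ρ₁:ℂ)) + ((ρ₁ - lam j : ℝ):ℂ) := by
            push_cast; ring
          rw [hre, div_shift_im _ hw0]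
          have h1 : (z - (ρ₁:ℂ)).im = z.im := by simp
          rw [h1]
          have h2 := Complex.normSq_pos.2 hw0
          have h3 : -z.im / Complex.normSq (z - (ρ₁:ℂ)) < 0 :=
            div_neg_of_neg_of_pos (by linarith) h2
          exact mul_neg_of_pos_of_neg (by linarith) h3
        rw [hbase, cpow_scale_neg hr hvim hwim hqim]
        have habs : Real.log (-((ρ₂ - ρ₁)/(lam j - ρ₁))) =
            Real.log ((ρ₂ - ρ₁) / |lam j - ρ₁|) := by
          rw [abs_of_neg hneg, div_neg]
        rw [hκdef]
        simp only [if_pos (show lam j < ρ₁ by linarith)]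
        rw [habs]
      · have hr : 0 < (ρ₂ - ρ₁)/(lam j - ρ₁) := div_pos hd hpos
        rw [hbase, cpow_scale_pos hr hvim hwim]
        have habs : Real.log ((ρ₂ - ρ₁)/(lam j - ρ₁)) =
            Real.log ((ρ₂ - ρ₁) / |lam j - ρ₁|) := by
          rw [abs_of_pos hpos]
        rw [hκdef]
        simp only [if_neg (show ¬ lam j < ρ₁ by linarith)]
        rw [habs]
        congr 1; ring
    have hLHS : h z = Complex.exp (Complex.log (z - ρ₂) * (b:ℂ)
        + (∑ j ∈ Finset.range m, ((aj j:ℝ):ℂ) * Complex.log (z - lam j))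
        - Complex.log (z - ρ₁)) := by
      have hp : ∏ j ∈ Finset.range m, (z - (lam j:ℂ)) ^ ((aj j:ℝ):ℂ)
          = Complex.exp (∑ j ∈ Finset.range m,
              ((aj j:ℝ):ℂ) * Complex.log (z - lam j)) := by
        rw [Complex.exp_sum]
        refine Finset.prod_congr rfl fun j _ => ?_
        rw [cpow_def_of_ne_zero (ne_zero_of_im_pos' (hsubim z (lam j) hz)), mul_comm]
      have hwinv : (z - (ρ₁:ℂ))⁻¹ = Complex.exp (-Complex.log (z - (ρ₁:ℂ))) := by
        rw [Complex.exp_neg, Complex.exp_log hw0]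
      rw [hh z, hp, cpow_def_of_ne_zero hu0, div_eq_mul_inv, hwinv,
        ← Complex.exp_add, ← Complex.exp_add]
      congr 1
    have hprod : ∏ j ∈ Finset.range m, (T z - T ((lam j:ℝ):ℂ)) ^ ((aj j:ℝ):ℂ)
        = Complex.exp (∑ j ∈ Finset.range m, (κ j + ((aj j:ℝ):ℂ) *
            (Complex.log (z - lam j) - Complex.log (z - ρ₁)))) := by
      rw [Complex.exp_sum]
      exact Finset.prod_congr rfl hA3
    rw [hLHS, hA1, hA2, hprod, ← Complex.exp_add, ← Complex.exp_add, ← Complex.exp_add]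
    congr 1
    rw [Finset.sum_add_distrib]
    have hsplit : ∑ j ∈ Finset.range m, ((aj j:ℝ):ℂ) *
          (Complex.log (z - lam j) - Complex.log (z - ρ₁))
        = (∑ j ∈ Finset.range m, ((aj j:ℝ):ℂ) * Complex.log (z - lam j))
          - (∑ j ∈ Finset.range m, ((aj j:ℝ):ℂ)) * Complex.log (z - ρ₁) := by
      rw [Finset.sum_mul, ← Finset.sum_sub_distrib]
      exact Finset.sum_congr rfl fun j _ => by ring
    rw [hsplit, hc8def]
    have hcoef : ((1/B₁:ℝ):ℂ) + (b:ℂ) + ∑ j ∈ Finset.range m, ((aj j:ℝ):ℂ) = 1 := by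
      have h9 : (1/B₁) + b + ∑ j ∈ Finset.range m, aj j = 1 := by rw [hS]; ring
      have h10 : ((1/B₁ + b + ∑ j ∈ Finset.range m, aj j : ℝ) : ℂ) = ((1:ℝ):ℂ) := by
        exact_mod_cast congrArg Complex.ofReal h9
      push_cast at h10
      convert h10 using 2 <;> push_cast <;> ring
    linear_combination (Complex.log (z - ρ₁)) * hcoef
  constructor
  · exact ⟨Complex.exp (-c8), Complex.exp_ne_zero _, hmain⟩
  · -- injectivity
    set c' : ℕ → ℝ := fun j => if j = 0 then 1/B₁ else if j = 1 then b else aj (j - 2)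
      with hc'def
    set x' : ℕ → ℝ := fun j => if j = 0 then 1 else if j = 1 then 0
      else (lam (j-2) - ρ₂)/(lam (j-2) - ρ₁) with hx'def
    have hc'0 : ∀ j ∈ Finset.range (m+2), 0 ≤ c' j := by
      intro j hj
      simp only [hc'def]
      rcases j with _ | j
      · simpa using hSpos.le
      · rcases j with _ | k
        · simpa using hb.le
        · rw [if_neg (by omega), if_neg (by omega)]
          have : k + 1 + 1 - 2 = k := by omega
          rw [this]
          exact (hajm k (by simp only [Finset.mem_range] at hj ⊢; omega)).le
    have hex' : ∃ j ∈ Finset.range (m+2), 0 < c' j :=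
      ⟨0, by simp, by simp only [hc'def]; simpa using hSpos⟩
    have hsum' : ∑ j ∈ Finset.range (m+2), c' j ≤ 1 := by
      rw [Finset.sum_range_succ', Finset.sum_range_succ']
      have e0 : c' 0 = 1/B₁ := by simp [hc'def]
      have e1 : c' 1 = b := by simp [hc'def]
      have e2 : ∀ i : ℕ, c' (i+1+1) = aj i := by
        intro i; simp only [hc'def]
        rw [if_neg (by omega), if_neg (by omega)]
        have h11 : i + 1 + 1 - 2 = i := by omega
        rw [h11]
      simp only [e2]
      rw [e0, e1]
      linarith [hS]
    have hform : ∀ ω : ℂ, 0 < ω.im →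
        (ω - 1) ^ ((1/B₁:ℝ):ℂ) * ω ^ (b:ℂ) *
          ∏ j ∈ Finset.range m, (ω - (((lam j - ρ₂)/(lam j - ρ₁) : ℝ):ℂ)) ^ ((aj j:ℝ):ℂ)
        = Complex.exp (∑ j ∈ Finset.range (m+2), (c' j : ℂ) * Complex.log (ω - x' j)) := by
      intro ω hω
      have hω1 : 0 < (ω - 1).im := by
        simpa using hω
      have he0 : (c' 0 : ℂ) * Complex.log (ω - (x' 0 : ℝ)) =
          ((1/B₁:ℝ):ℂ) * Complex.log (ω - 1) := by
        simp [hc'def, hx'def]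
      have he1 : (c' 1 : ℂ) * Complex.log (ω - (x' 1 : ℝ)) = (b:ℂ) * Complex.log ω := by
        simp [hc'def, hx'def]
      have he2 : ∀ i : ℕ, (c' (i+1+1) : ℂ) * Complex.log (ω - (x' (i+1+1) : ℝ))
          = ((aj i:ℝ):ℂ) * Complex.log (ω - (((lam i - ρ₂)/(lam i - ρ₁) : ℝ):ℂ)) := by
        intro i
        simp only [hc'def, hx'def]
        rw [if_neg (by omega), if_neg (by omega), if_neg (by omega), if_neg (by omega)]
        have h11 : i + 1 + 1 - 2 = i := by omega
        rw [h11]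
      rw [Finset.sum_range_succ', Finset.sum_range_succ']
      simp only [he2]
      rw [he0, he1, Complex.exp_add, Complex.exp_add]
      have hf1 : (ω - 1) ^ ((1/B₁:ℝ):ℂ) =
          Complex.exp (((1/B₁:ℝ):ℂ) * Complex.log (ω - 1)) := by
        rw [cpow_def_of_ne_zero (ne_zero_of_im_pos' hω1), mul_comm]
      have hf2 : ω ^ (b:ℂ) = Complex.exp ((b:ℂ) * Complex.log ω) := by
        rw [cpow_def_of_ne_zero (ne_zero_of_im_pos' hω), mul_comm]
      have hf3 : ∏ j ∈ Finset.range m,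
            (ω - (((lam j - ρ₂)/(lam j - ρ₁) : ℝ):ℂ)) ^ ((aj j:ℝ):ℂ)
          = Complex.exp (∑ j ∈ Finset.range m, ((aj j:ℝ):ℂ) *
              Complex.log (ω - (((lam j - ρ₂)/(lam j - ρ₁) : ℝ):ℂ))) := by
        rw [Complex.exp_sum]
        refine Finset.prod_congr rfl fun j _ => ?_
        rw [cpow_def_of_ne_zero (ne_zero_of_im_pos' (hsubim ω _ hω)), mul_comm]
      rw [hf1, hf2, hf3]
      ring
    have hcomp : ∀ z : ℂ, 0 < z.im → h z = Complex.exp (-c8) *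
        Complex.exp (∑ j ∈ Finset.range (m+2),
          (c' j : ℂ) * Complex.log (T z - x' j)) := by
      intro z hz
      rw [hmain z hz]
      have h12 : ∏ j ∈ Finset.range m, (T z - T ((lam j:ℝ):ℂ)) ^ ((aj j:ℝ):ℂ)
          = ∏ j ∈ Finset.range m,
              (T z - (((lam j - ρ₂)/(lam j - ρ₁) : ℝ):ℂ)) ^ ((aj j:ℝ):ℂ) := by
        refine Finset.prod_congr rfl fun j _ => ?_
        rw [hTlam j]
      rw [h12, ← hform (T z) (hTim z hz)]
      ring
    intro z₁ hz₁ z₂ hz₂ hhz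
    simp only [Set.mem_setOf_eq] at hz₁ hz₂
    rw [hcomp z₁ hz₁, hcomp z₂ hz₂] at hhz
    have hexp := mul_left_cancel₀ (Complex.exp_ne_zero (-c8)) hhz
    obtain ⟨k, hk⟩ := Complex.exp_eq_exp_iff_exists_int.mp hexp
    have him1 := im_sum_log_bounds (m+2) c' x' hc'0 hex' hsum' (hTim z₁ hz₁)
    have him2 := im_sum_log_bounds (m+2) c' x' hc'0 hex' hsum' (hTim z₂ hz₂)
    have hkim : (∑ j ∈ Finset.range (m+2), (c' j : ℂ) * Complex.log (T z₁ - x' j)).im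
        = (∑ j ∈ Finset.range (m+2), (c' j : ℂ) * Complex.log (T z₂ - x' j)).im
          + (k:ℝ) * (2 * Real.pi) := by
      rw [hk]
      simp [Complex.add_im, Complex.mul_im]
    have hπ := Real.pi_pos
    have hk0 : k = 0 := by
      have h4 : (k:ℝ) * (2*Real.pi) < Real.pi := by linarith [him1.2, him2.1]
      have h5 : -Real.pi < (k:ℝ) * (2*Real.pi) := by linarith [him1.1, him2.2]
      have h6 : (k:ℝ) < 1 := by nlinarith
      have h7 : (-1:ℝ) < (k:ℝ) := by nlinarith
      have h8 : k < 1 := by exact_mod_cast h6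
      have h9 : (-1:ℤ) < k := by exact_mod_cast h7
      omega
    have hψeq : (∑ j ∈ Finset.range (m+2), (c' j : ℂ) * Complex.log (T z₁ - x' j))
        = (∑ j ∈ Finset.range (m+2), (c' j : ℂ) * Complex.log (T z₂ - x' j)) := by
      rw [hk, hk0]; simp
    have hTeq : T z₁ = T z₂ :=
      injOn_sum_log (m+2) c' x' hc'0 hex'
        (Set.mem_setOf_eq ▸ hTim z₁ hz₁) (Set.mem_setOf_eq ▸ hTim z₂ hz₂) hψeq
    have hw1 : z₁ - (ρ₁:ℂ) ≠ 0 := ne_zero_of_im_pos' (hsubim z₁ ρ₁ hz₁)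
    have hw2 : z₂ - (ρ₁:ℂ) ≠ 0 := ne_zero_of_im_pos' (hsubim z₂ ρ₁ hz₂)
    rw [hT, hT, div_eq_div_iff hw1 hw2] at hTeq
    have hz12 : (z₁ - z₂) * ((ρ₂:ℂ) - (ρ₁:ℂ)) = 0 := by linear_combination hTeq
    rcases mul_eq_zero.mp hz12 with h13 | h13
    · exact sub_eq_zero.mp h13
    · exfalso
      have : (ρ₂:ℂ) ≠ (ρ₁:ℂ) := by exact_mod_cast hρ.ne'
      exact this (sub_eq_zero.mp h13)
end

section
/- Suppose P has a double real root ρ₀ and simple real roots λ₁,…,λ_{n−1}, i.e. P(z) = (z−ρ₀)²∏ⱼ(z−λⱼ). Then in the decomposition ∏ⱼ(z−kⱼ) = P(z)(Σⱼ Aⱼ/(z−λⱼ) + B₁/(z−ρ₀) + B₂z/(z−ρ₀)²), one has Aⱼ = ∏ᵢ(λⱼ−kᵢ)/(∏_{i≠j}(λⱼ−λᵢ)(λⱼ−ρ₀)²) < 0 for each j, B₂ρ₀ = ∏ⱼ(ρ₀−kⱼ)/∏ⱼ(ρ₀−λⱼ), and B₁+B₂+Σⱼ Aⱼ = 1; moreover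 if ρ₀ < k₁ then B₂ρ₀ < 0. -/
open Polynomial Finset

/-- Product of negatives: sign extraction. -/
lemma aux_prod_neg (s : Finset ℕ) (f : ℕ → ℝ) (h : ∀ i ∈ s, f i < 0) :
    ∏ i ∈ s, f i = (-1) ^ s.card * ∏ i ∈ s, (-f i) := by
  rw [Finset.pow_card_mul_prod]
  exact Finset.prod_congr rfl fun i _ => by ring

lemma aux_prod_neg_pos (s : Finset ℕ) (f : ℕ → ℝ) (h : ∀ i ∈ s, f i < 0) :
    0 < ∏ i ∈ s, (-f i) :=
  Finset.prod_pos fun i hi => by linarith [h i hi]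

/-- double-root case. If P(x) = (x−ρ₀)²∏ⱼ(x−λⱼ), then in the decomposition
∏ⱼ(x−kⱼ) = P(x)(Σⱼ Aⱼ/(x−λⱼ) + B₁/(x−ρ₀) + B₂x/(x−ρ₀)²) one has
Aⱼ = ∏ᵢ(λⱼ−kᵢ)/(∏_{i≠j}(λⱼ−λᵢ)(λⱼ−ρ₀)²) < 0, B₂ρ₀ = ∏ⱼ(ρ₀−kⱼ)/∏ⱼ(ρ₀−λⱼ),
B₁ + B₂ + ΣⱼAⱼ = 1, and if ρ₀ < k₁ then B₂ρ₀ < 0. -/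
theorem stmt_13 (n : ℕ) (hn : 0 < n) (k : ℕ → ℝ)
    (hk : ∀ i j, i < j → j < n → k i < k j)
    (b : ℕ → ℝ) (hb : ∀ j, j < n → 0 < b j)
    (P : ℝ → ℝ)
    (hP : ∀ x, P x = x * ∏ j ∈ Finset.range n, (x - k j) +
      ∑ j ∈ Finset.range n, 4 * b j * ∏ i ∈ (Finset.range n).erase j, (x - k i))
    (lam : ℕ → ℝ) (hlam : ∀ j, j + 1 < n → lam j ∈ Set.Ioo (k j) (k (j + 1)))
    (ρ₀ : ℝ) (hρ₀ : ∀ j, j + 1 < n → ρ₀ ≠ lam j)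
    (hfact : ∀ x : ℝ, P x = (x - ρ₀) ^ 2 * ∏ j ∈ Finset.range (n - 1), (x - lam j))
    (A : ℕ → ℝ) (B₁ B₂ : ℝ)
    (hPFD : ∀ x : ℝ, x ≠ ρ₀ → (∀ j, j + 1 < n → x ≠ lam j) →
      ∏ j ∈ Finset.range n, (x - k j) = P x *
        (∑ j ∈ Finset.range (n - 1), A j / (x - lam j) + B₁ / (x - ρ₀) +
          B₂ * x / (x - ρ₀) ^ 2)) :
    (∀ j, j + 1 < n → A j = (∏ i ∈ Finset.range n, (lam j - k i)) /
        ((∏ i ∈ (Finset.range (n - 1)).erase j, (lam j - lam i)) * (lam j - ρ₀) ^ 2) ∧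
      A j < 0) ∧
    B₂ * ρ₀ = (∏ j ∈ Finset.range n, (ρ₀ - k j)) / ∏ j ∈ Finset.range (n - 1), (ρ₀ - lam j) ∧
    B₁ + B₂ + ∑ j ∈ Finset.range (n - 1), A j = 1 ∧
    (ρ₀ < k 0 → B₂ * ρ₀ < 0) := by
  set m := n - 1 with hm
  -- basic facts about lam and k
  have hkle : ∀ i j, i ≤ j → j < n → k i ≤ k j := by
    intro i j hij hj
    rcases eq_or_lt_of_le hij with h | h
    · rw [h]
    · exact (hk i j h hj).le
  have hlam' : ∀ j, j < m → lam j ∈ Set.Ioo (k j) (k (j + 1)) :=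
    fun j hj => hlam j (by omega)
  have hρ₀' : ∀ j, j < m → ρ₀ ≠ lam j := fun j hj => hρ₀ j (by omega)
  have hlamlt : ∀ i j, i < j → j < m → lam i < lam j := by
    intro i j hij hj
    have h1 := (hlam' i (by omega)).2
    have h2 := (hlam' j hj).1
    have h3 : k (i + 1) ≤ k j := hkle (i + 1) j (by omega) (by omega)
    linarith
  have hlamk : ∀ j i, j < m → i < n → lam j ≠ k i := by
    intro j i hj hi
    rcases lt_or_ge i (j + 1) with h | h
    · have := (hlam' j hj).1
      have h2 : k i ≤ k j := hkle i j (by omega) (by omega)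
      intro he; rw [he] at this; linarith
    · have := (hlam' j hj).2
      have h2 : k (j + 1) ≤ k i := hkle (j + 1) i h hi
      intro he; rw [he] at this; linarith
  -- polynomials
  set L : Polynomial ℝ := ∏ j ∈ Finset.range m, (X - C (lam j)) with hL
  set Qp : Polynomial ℝ := ∏ j ∈ Finset.range n, (X - C (k j)) with hQp
  set Rp : Polynomial ℝ :=
    (∑ j ∈ Finset.range m, C (A j) *
      ((X - C ρ₀) ^ 2 * ∏ i ∈ (Finset.range m).erase j, (X - C (lam i)))) +
    C B₁ * ((X - C ρ₀) * L) + C B₂ * (X * L) with hRp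
  have hQeval : ∀ x : ℝ, Qp.eval x = ∏ j ∈ Finset.range n, (x - k j) := by
    intro x; simp [hQp, eval_prod]
  have hLeval : ∀ x : ℝ, L.eval x = ∏ j ∈ Finset.range m, (x - lam j) := by
    intro x; simp [hL, eval_prod]
  have hReval : ∀ x : ℝ, Rp.eval x =
      (∑ j ∈ Finset.range m, A j *
        ((x - ρ₀) ^ 2 * ∏ i ∈ (Finset.range m).erase j, (x - lam i))) +
      B₁ * ((x - ρ₀) * ∏ j ∈ Finset.range m, (x - lam j)) +
      B₂ * (x * ∏ j ∈ Finset.range m, (x - lam j)) := by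
    intro x
    simp [hRp, eval_prod, eval_finset_sum, hLeval]
  -- eval equality off the finite exceptional set
  have hkey : ∀ x : ℝ, x ≠ ρ₀ → (∀ j, j < m → x ≠ lam j) → Qp.eval x = Rp.eval x := by
    intro x hx hlx
    have h1 : x - ρ₀ ≠ 0 := sub_ne_zero.2 hx
    have h2 : ∀ j ∈ Finset.range m, x - lam j ≠ 0 := fun j hj =>
      sub_ne_zero.2 (hlx j (Finset.mem_range.1 hj))
    have hpfd := hPFD x hx (fun j hj => hlx j (by omega))
    rw [hfact x] at hpfd
    rw [hQeval, hReval, hpfd]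
    rw [mul_add, mul_add, Finset.mul_sum]
    have hp2 : (x - ρ₀) ^ 2 ≠ 0 := pow_ne_zero 2 h1
    congr 1
    · congr 1
      · refine Finset.sum_congr rfl fun j hj => ?_
        have hne := h2 j hj
        rw [← Finset.mul_prod_erase _ _ hj]
        calc ((x - ρ₀) ^ 2 * ((x - lam j) * ∏ i ∈ (Finset.range m).erase j, (x - lam i))) *
              (A j / (x - lam j))
            = ((x - ρ₀) ^ 2 * ∏ i ∈ (Finset.range m).erase j, (x - lam i)) *
              (A j / (x - lam j) * (x - lam j)) := by ring
          _ = A j * ((x - ρ₀) ^ 2 * ∏ i ∈ (Finset.range m).erase j, (x - lam i)) := by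
              rw [div_mul_cancel₀ _ hne]; ring
      · calc ((x - ρ₀) ^ 2 * ∏ j ∈ Finset.range m, (x - lam j)) * (B₁ / (x - ρ₀))
            = ((x - ρ₀) * ∏ j ∈ Finset.range m, (x - lam j)) * (B₁ / (x - ρ₀) * (x - ρ₀)) := by
              ring
          _ = B₁ * ((x - ρ₀) * ∏ j ∈ Finset.range m, (x - lam j)) := by
              rw [div_mul_cancel₀ _ h1]; ring
    · calc ((x - ρ₀) ^ 2 * ∏ j ∈ Finset.range m, (x - lam j)) * (B₂ * x / (x - ρ₀) ^ 2)
          = (∏ j ∈ Finset.range m, (x - lam j)) * (B₂ * x / (x - ρ₀) ^ 2 * (x - ρ₀) ^ 2) := by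
            ring
        _ = B₂ * (x * ∏ j ∈ Finset.range m, (x - lam j)) := by
            rw [div_mul_cancel₀ _ hp2]; ring
  -- polynomial equality
  have hQR : Qp = Rp := by
    have : Qp - Rp = 0 := by
      apply Polynomial.eq_zero_of_infinite_isRoot
      apply Set.Infinite.mono (s := {x : ℝ | x ≠ ρ₀ ∧ ∀ j, j < m → x ≠ lam j})
      · intro x hx
        simp only [Set.mem_setOf_eq, IsRoot, eval_sub, sub_eq_zero]
        exact hkey x hx.1 hx.2
      · have hfin : Set.Finite ({ρ₀} ∪ (lam '' (Set.Iio m : Set ℕ))) :=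
          (Set.finite_singleton ρ₀).union ((Set.finite_Iio m).image lam)
        have : {x : ℝ | x ≠ ρ₀ ∧ ∀ j, j < m → x ≠ lam j} =
            ({ρ₀} ∪ (lam '' (Set.Iio m : Set ℕ)))ᶜ := by
          ext x
          simp only [Set.mem_setOf_eq, Set.mem_compl_iff, Set.mem_union,
            Set.mem_singleton_iff, Set.mem_image, Set.mem_Iio, not_or, not_exists]
          constructor
          · rintro ⟨h1, h2⟩
            exact ⟨h1, fun j ⟨hj, he⟩ => h2 j hj he.symm⟩
          · rintro ⟨h1, h2⟩
            exact ⟨h1, fun j hj he => h2 j ⟨hj, he.symm⟩⟩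
        rw [this]
        exact Set.Finite.infinite_compl hfin
    exact sub_eq_zero.1 this
  have hevalQR : ∀ x : ℝ, Qp.eval x = Rp.eval x := fun x => by rw [hQR]
  -- evaluation at lam j gives the A j formula
  have hAformula : ∀ j, j < m → A j = (∏ i ∈ Finset.range n, (lam j - k i)) /
      ((∏ i ∈ (Finset.range m).erase j, (lam j - lam i)) * (lam j - ρ₀) ^ 2) := by
    intro j hj
    have hjm : j ∈ Finset.range m := Finset.mem_range.2 hj
    have hEne : (∏ i ∈ (Finset.range m).erase j, (lam j - lam i)) ≠ 0 := by
      apply Finset.prod_ne_zero_iff.2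
      intro i hi
      have hine : i ≠ j := Finset.ne_of_mem_erase hi
      have him : i < m := Finset.mem_range.1 (Finset.mem_of_mem_erase hi)
      rcases lt_or_gt_of_ne hine with h | h
      · exact sub_ne_zero.2 (ne_of_gt (hlamlt i j h hj))
      · exact sub_ne_zero.2 (ne_of_lt (hlamlt j i h him))
    have hrne : (lam j - ρ₀) ^ 2 ≠ 0 :=
      pow_ne_zero 2 (sub_ne_zero.2 (fun he => hρ₀' j hj he.symm))
    have he := hevalQR (lam j)
    rw [hQeval, hReval] at he
    have hz : ∏ i ∈ Finset.range m, (lam j - lam i) = 0 :=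
      Finset.prod_eq_zero hjm (sub_self _)
    rw [hz] at he
    have hsum : (∑ j' ∈ Finset.range m, A j' *
        ((lam j - ρ₀) ^ 2 * ∏ i ∈ (Finset.range m).erase j', (lam j - lam i))) =
        A j * ((lam j - ρ₀) ^ 2 * ∏ i ∈ (Finset.range m).erase j, (lam j - lam i)) := by
      apply Finset.sum_eq_single_of_mem j hjm
      intro j' hj' hne
      have hmem : j ∈ (Finset.range m).erase j' := Finset.mem_erase.2 ⟨hne.symm, hjm⟩
      rw [Finset.prod_eq_zero hmem (show lam j - lam j = (0:ℝ) by ring)]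
      ring
    rw [hsum] at he
    rw [eq_div_iff (mul_ne_zero hEne hrne)]
    linarith [he]
  -- sign of A j
  have hAneg : ∀ j, j < m → A j < 0 := by
    intro j hj
    rw [hAformula j hj]
    -- numerator: split range n into range (j+1) and Ico (j+1) n
    have hsplitN : (∏ i ∈ Finset.range n, (lam j - k i)) =
        (∏ i ∈ Finset.range (j+1), (lam j - k i)) *
        (∏ i ∈ Finset.Ico (j+1) n, (lam j - k i)) := by
      rw [Finset.range_eq_Ico, ← Finset.prod_Ico_consecutive _ (Nat.zero_le (j+1)) (by omega),
        ← Finset.range_eq_Ico]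
    have hsplitE : ((Finset.range m).erase j) =
        Finset.range j ∪ Finset.Ico (j+1) m := by
      ext i
      simp only [Finset.mem_erase, Finset.mem_range, Finset.mem_union, Finset.mem_Ico]
      omega
    have hdisj : Disjoint (Finset.range j) (Finset.Ico (j+1) m) := by
      simp only [Finset.disjoint_left, Finset.mem_range, Finset.mem_Ico]
      omega
    have hE : (∏ i ∈ (Finset.range m).erase j, (lam j - lam i)) =
        (∏ i ∈ Finset.range j, (lam j - lam i)) *
        (∏ i ∈ Finset.Ico (j+1) m, (lam j - lam i)) := by
      rw [hsplitE, Finset.prod_union hdisj]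
    -- positive parts
    have hpos1 : 0 < ∏ i ∈ Finset.range (j+1), (lam j - k i) := by
      apply Finset.prod_pos
      intro i hi
      have hi' : i < j + 1 := Finset.mem_range.1 hi
      have h1 : k i ≤ k j := hkle i j (by omega) (by omega)
      have h2 := (hlam' j hj).1
      linarith
    have hpos2 : 0 < ∏ i ∈ Finset.range j, (lam j - lam i) := by
      apply Finset.prod_pos
      intro i hi
      have := hlamlt i j (Finset.mem_range.1 hi) hj
      linarith
    -- negative parts
    have hneg1 : ∀ i ∈ Finset.Ico (j+1) n, lam j - k i < 0 := by
      intro i hi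
      rw [Finset.mem_Ico] at hi
      have h1 : k (j+1) ≤ k i := hkle (j+1) i hi.1 hi.2
      have h2 := (hlam' j hj).2
      linarith
    have hneg2 : ∀ i ∈ Finset.Ico (j+1) m, lam j - lam i < 0 := by
      intro i hi
      rw [Finset.mem_Ico] at hi
      have := hlamlt j i hi.1 hi.2
      linarith
    have hc1 : (Finset.Ico (j+1) n).card = n - j - 1 := by
      rw [Nat.card_Ico]; omega
    have hc2 : (Finset.Ico (j+1) m).card = m - j - 1 := by
      rw [Nat.card_Ico]; omega
    have hv1 := aux_prod_neg _ _ hneg1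
    have hv2 := aux_prod_neg _ _ hneg2
    have hp1 := aux_prod_neg_pos _ _ hneg1
    have hp2 := aux_prod_neg_pos _ _ hneg2
    -- numerator * (prod erase) < 0
    have hodd : Odd ((Finset.Ico (j+1) n).card + (Finset.Ico (j+1) m).card) := by
      rw [hc1, hc2]
      refine ⟨n - j - 2, by omega⟩
    have hprodneg : (∏ i ∈ Finset.range n, (lam j - k i)) *
        (∏ i ∈ (Finset.range m).erase j, (lam j - lam i)) < 0 := by
      rw [hsplitN, hE, hv1, hv2]
      have : (∏ i ∈ Finset.range (j+1), (lam j - k i)) *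
          ((-1:ℝ) ^ (Finset.Ico (j+1) n).card * ∏ i ∈ Finset.Ico (j+1) n, -(lam j - k i)) *
          ((∏ i ∈ Finset.range j, (lam j - lam i)) *
          ((-1:ℝ) ^ (Finset.Ico (j+1) m).card * ∏ i ∈ Finset.Ico (j+1) m, -(lam j - lam i))) =
          ((-1:ℝ) ^ ((Finset.Ico (j+1) n).card + (Finset.Ico (j+1) m).card)) *
          ((∏ i ∈ Finset.range (j+1), (lam j - k i)) *
          (∏ i ∈ Finset.Ico (j+1) n, -(lam j - k i)) *
          (∏ i ∈ Finset.range j, (lam j - lam i)) *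
          (∏ i ∈ Finset.Ico (j+1) m, -(lam j - lam i))) := by
        rw [pow_add]; ring
      rw [this, Odd.neg_one_pow hodd]
      have hposall : 0 < (∏ i ∈ Finset.range (j+1), (lam j - k i)) *
          (∏ i ∈ Finset.Ico (j+1) n, -(lam j - k i)) *
          (∏ i ∈ Finset.range j, (lam j - lam i)) *
          (∏ i ∈ Finset.Ico (j+1) m, -(lam j - lam i)) := by positivity
      linarith
    have hrpos : 0 < (lam j - ρ₀) ^ 2 := by
      have : lam j - ρ₀ ≠ 0 := sub_ne_zero.2 (fun he => hρ₀' j hj he.symm)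
      positivity
    rcases mul_neg_iff.1 hprodneg with ⟨hN, hD⟩ | ⟨hN, hD⟩
    · exact div_neg_of_pos_of_neg hN (mul_neg_of_neg_of_pos hD hrpos)
    · exact div_neg_of_neg_of_pos hN (mul_pos hD hrpos)
  -- B₂ ρ₀ formula
  have hLρ : (∏ j ∈ Finset.range m, (ρ₀ - lam j)) ≠ 0 := by
    apply Finset.prod_ne_zero_iff.2
    intro i hi
    exact sub_ne_zero.2 (hρ₀' i (Finset.mem_range.1 hi))
  have hB₂ : B₂ * ρ₀ = (∏ j ∈ Finset.range n, (ρ₀ - k j)) /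
      ∏ j ∈ Finset.range m, (ρ₀ - lam j) := by
    have he := hevalQR ρ₀
    rw [hQeval, hReval] at he
    have hz : ∀ j' ∈ Finset.range m, A j' *
        ((ρ₀ - ρ₀) ^ 2 * ∏ i ∈ (Finset.range m).erase j', (ρ₀ - lam i)) = 0 := by
      intro j' _; rw [sub_self]; ring
    rw [Finset.sum_congr rfl hz, Finset.sum_const_zero, sub_self] at he
    rw [eq_div_iff hLρ]
    rw [he]; ring
  -- leading coefficient comparison
  have hsum1 : B₁ + B₂ + ∑ j ∈ Finset.range m, A j = 1 := by
    have hQmonic : Qp.Monic := monic_prod_of_monic _ _ fun i _ => monic_X_sub_C _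
    have hQdeg : Qp.natDegree = n := by
      rw [hQp, Polynomial.natDegree_prod _ _ fun i _ => X_sub_C_ne_zero _]
      simp [natDegree_X_sub_C]
    have hQcoeff : Qp.coeff n = 1 := by
      have := hQmonic.coeff_natDegree
      rwa [hQdeg] at this
    have hLmonic : L.Monic := monic_prod_of_monic _ _ fun i _ => monic_X_sub_C _
    have hLdeg : L.natDegree = m := by
      rw [hL, Polynomial.natDegree_prod _ _ fun i _ => X_sub_C_ne_zero _]
      simp [natDegree_X_sub_C]
    have hRcoeff : Rp.coeff n = (∑ j ∈ Finset.range m, A j) + B₁ + B₂ := by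
      rw [hRp]
      rw [Polynomial.coeff_add, Polynomial.coeff_add, Polynomial.finset_sum_coeff]
      congr 1
      · congr 1
        · refine Finset.sum_congr rfl fun j hj => ?_
          have hjm : j < m := Finset.mem_range.1 hj
          rw [Polynomial.coeff_C_mul]
          have hmon : ((X - C ρ₀) ^ 2 *
              ∏ i ∈ (Finset.range m).erase j, (X - C (lam i))).Monic :=
            ((monic_X_sub_C ρ₀).pow 2).mul
              (monic_prod_of_monic _ _ fun i _ => monic_X_sub_C _)
          have hdeg : ((X - C ρ₀) ^ 2 *
              ∏ i ∈ (Finset.range m).erase j, (X - C (lam i))).natDegree = n := by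
            rw [((monic_X_sub_C ρ₀).pow 2).natDegree_mul
              (monic_prod_of_monic _ _ fun i _ => monic_X_sub_C _)]
            rw [Polynomial.natDegree_prod _ _ fun i _ => X_sub_C_ne_zero _]
            simp only [natDegree_X_sub_C, Finset.sum_const, smul_eq_mul, mul_one,
              Finset.card_erase_of_mem hj, Finset.card_range]
            rw [natDegree_pow, natDegree_X_sub_C]
            omega
          have := hmon.coeff_natDegree
          rw [hdeg] at this
          rw [this, mul_one]
        · rw [Polynomial.coeff_C_mul]
          have hmon : ((X - C ρ₀) * L).Monic := (monic_X_sub_C ρ₀).mul hLmonic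
          have hdeg : ((X - C ρ₀) * L).natDegree = n := by
            rw [(monic_X_sub_C ρ₀).natDegree_mul hLmonic, natDegree_X_sub_C, hLdeg]
            omega
          have := hmon.coeff_natDegree
          rw [hdeg] at this
          rw [this, mul_one]
      · rw [Polynomial.coeff_C_mul]
        have hmon : (X * L).Monic := monic_X.mul hLmonic
        have hdeg : (X * L).natDegree = n := by
          rw [monic_X.natDegree_mul hLmonic, natDegree_X, hLdeg]
          omega
        have := hmon.coeff_natDegree
        rw [hdeg] at this
        rw [this, mul_one]
    have : Qp.coeff n = Rp.coeff n := by rw [hQR]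
    rw [hQcoeff, hRcoeff] at this
    linarith
  -- final sign claim
  have hfinal : ρ₀ < k 0 → B₂ * ρ₀ < 0 := by
    intro hρk
    rw [hB₂]
    have hnegN : ∀ i ∈ Finset.range n, ρ₀ - k i < 0 := by
      intro i hi
      have : k 0 ≤ k i := hkle 0 i (Nat.zero_le _) (Finset.mem_range.1 hi)
      linarith
    have hnegD : ∀ i ∈ Finset.range m, ρ₀ - lam i < 0 := by
      intro i hi
      have him : i < m := Finset.mem_range.1 hi
      have h1 := (hlam' i him).1
      have h2 : k 0 ≤ k i := hkle 0 i (Nat.zero_le _) (by omega)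
      linarith
    have hv1 := aux_prod_neg _ _ hnegN
    have hv2 := aux_prod_neg _ _ hnegD
    have hp1 := aux_prod_neg_pos _ _ hnegN
    have hp2 := aux_prod_neg_pos _ _ hnegD
    have hodd : Odd ((Finset.range n).card + (Finset.range m).card) := by
      simp only [Finset.card_range]
      exact ⟨n - 1, by omega⟩
    have hprodneg : (∏ i ∈ Finset.range n, (ρ₀ - k i)) *
        (∏ i ∈ Finset.range m, (ρ₀ - lam i)) < 0 := by
      rw [hv1, hv2]
      have : ((-1:ℝ) ^ (Finset.range n).card * ∏ i ∈ Finset.range n, -(ρ₀ - k i)) *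
          ((-1:ℝ) ^ (Finset.range m).card * ∏ i ∈ Finset.range m, -(ρ₀ - lam i)) =
          ((-1:ℝ) ^ ((Finset.range n).card + (Finset.range m).card)) *
          ((∏ i ∈ Finset.range n, -(ρ₀ - k i)) *
          (∏ i ∈ Finset.range m, -(ρ₀ - lam i))) := by
        rw [pow_add]; ring
      rw [this, Odd.neg_one_pow hodd]
      nlinarith
    rcases mul_neg_iff.1 hprodneg with ⟨hN, hD⟩ | ⟨hN, hD⟩
    · exact div_neg_of_pos_of_neg hN hD
    · exact div_neg_of_neg_of_pos hN hD
  exact ⟨fun j hj => ⟨hAformula j (by omega), hAneg j (by omega)⟩, hB₂, hsum1, hfinal⟩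
end

section
/- Let ρ₀ ∈ ℝ, λ₁,…,λ_{n−1} real with λⱼ ≠ ρ₀, Aⱼ < 0, and B₂ρ₀ < 0. Define F(z) = Σⱼ Aⱼ/(z − T(λⱼ)) − 1/z + B₂ρ₀ on ℍ, where T(w) = 1/(ρ₀−w) and ρ₀ < λⱼ for all j (so T(λⱼ) ∈ ℝ). Then Im F(z) > 0 for all z ∈ ℍ, and consequently the holomorphic function G on ℍ with G' = F is univalent on ℍ. -/
open Complex

/-- the function F(z) = ΣⱼAⱼ/(z−T(λⱼ)) − 1/z + B₂ρ₀ (with Aⱼ < 0, B₂ρ₀ < 0,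
T(w) = 1/(ρ₀−w), ρ₀ < λⱼ) has positive imaginary part on ℍ; consequently any holomorphic
primitive G of F on ℍ is univalent (Noshiro–Warschawski). -/
theorem stmt_14 (n : ℕ) (ρ₀ : ℝ) (lam : ℕ → ℝ) (hlam : ∀ j, j + 1 < n → ρ₀ < lam j)
    (A : ℕ → ℝ) (hA : ∀ j, j + 1 < n → A j < 0) (c : ℝ) (hc : c < 0)
    (F : ℂ → ℂ)
    (hF : ∀ z : ℂ, F z = ∑ j ∈ Finset.range (n - 1),
        (A j : ℂ) / (z - ((1 / (ρ₀ - lam j) : ℝ) : ℂ)) - 1 / z + (c : ℂ)) :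
    (∀ z : ℂ, 0 < z.im → 0 < (F z).im) ∧
    ∀ G : ℂ → ℂ, DifferentiableOn ℂ G {z : ℂ | 0 < z.im} →
      (∀ z : ℂ, 0 < z.im → HasDerivAt G (F z) z) →
      Set.InjOn G {z : ℂ | 0 < z.im} := by
  have him : ∀ z : ℂ, 0 < z.im → 0 < (F z).im := by
    intro z hz
    have hz0 : z ≠ 0 := fun h => by simp [h] at hz
    rw [hF]
    have hsum : 0 ≤ (∑ j ∈ Finset.range (n - 1),
        (A j : ℂ) / (z - ((1 / (ρ₀ - lam j) : ℝ) : ℂ))).im := by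
      rw [Complex.im_sum]
      apply Finset.sum_nonneg
      intro j hj
      have hjn : j + 1 < n := by
        have := Finset.mem_range.mp hj; omega
      have hAj := hA j hjn
      set w : ℂ := z - ((1 / (ρ₀ - lam j) : ℝ) : ℂ) with hw
      have hwim : w.im = z.im := by simp [hw]
      have hns : 0 < Complex.normSq w := by
        apply Complex.normSq_pos.mpr
        intro h; rw [h] at hwim; simp at hwim; rw [← hwim] at hz; simp at hz
      rw [Complex.div_im]
      simp only [Complex.ofReal_im, Complex.ofReal_re, hwim, zero_mul, zero_div, zero_sub]
      rw [neg_nonneg]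
      apply div_nonpos_of_nonpos_of_nonneg
      · nlinarith
      · exact hns.le
    have hinv : (1 / z).im < 0 := by
      rw [one_div, Complex.inv_im]
      apply div_neg_of_neg_of_pos
      · linarith
      · exact Complex.normSq_pos.mpr hz0
    simp only [Complex.add_im, Complex.sub_im, Complex.ofReal_im]
    linarith
  refine ⟨him, ?_⟩
  intro G hG hG' x hx y hy hGxy
  by_contra hne
  have hd : y - x ≠ 0 := sub_ne_zero.mpr (fun h => hne h.symm)
  set d : ℂ := y - x with hdd
  simp only [Set.mem_setOf_eq] at hx hy
  set γ : ℝ → ℂ := fun t => x + (t : ℂ) * d with hγ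
  have hγim : ∀ t : ℝ, t ∈ Set.Icc (0:ℝ) 1 → 0 < (γ t).im := by
    intro t ht
    have : (γ t).im = (1 - t) * x.im + t * y.im := by
      simp [hγ, hdd, Complex.add_im, Complex.mul_im]
      ring
    rw [this]
    rcases ht with ⟨h0, h1⟩
    rcases h0.lt_or_eq with h | h
    · nlinarith [mul_pos h hy, mul_nonneg (by linarith : (0:ℝ) ≤ 1 - t) hx.le]
    · rw [← h]; simpa using hx
  have hγd : ∀ t : ℝ, HasDerivAt γ d t := by
    intro t
    have h1 : HasDerivAt (fun t : ℝ => ((t : ℝ) : ℂ)) 1 t := by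
      simpa using (hasDerivAt_id t).ofReal_comp
    show HasDerivAt (fun t : ℝ => x + (t : ℂ) * d) d t
    simpa using (h1.mul_const d).const_add x
  set ψ : ℝ → ℝ := fun t => (G (γ t) / d).im with hψ
  have hψd : ∀ t : ℝ, t ∈ Set.Icc (0:ℝ) 1 → HasDerivAt ψ ((F (γ t)).im) t := by
    intro t ht
    have hg := hG' (γ t) (hγim t ht)
    have hcomp : HasDerivAt (fun t => G (γ t)) (F (γ t) * d) t := by
      exact (hg.comp t (hγd t))
    have hdiv : HasDerivAt (fun t => G (γ t) / d) (F (γ t)) t := by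
      have := hcomp.div_const d
      simpa [mul_div_assoc, div_self hd] using this
    exact (Complex.imCLM.hasFDerivAt.comp_hasDerivAt t hdiv)
  have hmono : StrictMonoOn ψ (Set.Icc (0:ℝ) 1) := by
    apply strictMonoOn_of_deriv_pos (convex_Icc 0 1)
    · intro t ht
      exact ((hψd t ht).differentiableAt).continuousAt.continuousWithinAt
    · intro t ht
      rw [interior_Icc] at ht
      rw [(hψd t ⟨ht.1.le, ht.2.le⟩).deriv]
      exact him (γ t) (hγim t ⟨ht.1.le, ht.2.le⟩)
  have h01 : ψ 0 < ψ 1 := hmono (by norm_num) (by norm_num) (by norm_num)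
  have e0 : ψ 0 = (G x / d).im := by simp [hψ, hγ]
  have e1 : ψ 1 = (G y / d).im := by
    have : γ 1 = y := by simp [hγ, hdd]
    simp [hψ, this]
  rw [e0, e1, hGxy] at h01
  exact lt_irrefl _ h01
end

section
/- Let u, v : [0, δ] → ℝ be continuous, C¹ on (0, δ], with u(0) = 1, v(0) = 0, v(t) > 0 and v'(t) ≥ 0 for t ∈ (0, δ], u'(t) < 0 on (0,δ], and suppose lim_{t→0⁺}((1−u(t))u'(t) + v(t)v'(t)) = −2 and lim_{t→0⁺}((1−u(t))v'(t) − u'(t)v(t)) = 0. Then lim_{t→0⁺} v(t)/(1−u(t)) = 0. -/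
open Set Filter Topology

/-- key analytic lemma for the orthogonal intersection of the Loewner trace
with the unit circle: under the stated conditions, v(t)/(1−u(t)) → 0 as t → 0⁺. -/
theorem stmt_18 (δ : ℝ) (hδ : 0 < δ) (u v u' v' : ℝ → ℝ)
    (hu : ContinuousOn u (Set.Icc 0 δ)) (hv : ContinuousOn v (Set.Icc 0 δ))
    (hud : ∀ t ∈ Set.Ioc (0 : ℝ) δ, HasDerivAt u (u' t) t)
    (hvd : ∀ t ∈ Set.Ioc (0 : ℝ) δ, HasDerivAt v (v' t) t)
    (hu0 : u 0 = 1) (hv0 : v 0 = 0)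
    (hvpos : ∀ t ∈ Set.Ioc (0 : ℝ) δ, 0 < v t)
    (hv'nonneg : ∀ t ∈ Set.Ioc (0 : ℝ) δ, 0 ≤ v' t)
    (hu'neg : ∀ t ∈ Set.Ioc (0 : ℝ) δ, u' t < 0)
    (hlim1 : Filter.Tendsto (fun t => (1 - u t) * u' t + v t * v' t)
      (nhdsWithin 0 (Set.Ioi 0)) (nhds (-2)))
    (hlim2 : Filter.Tendsto (fun t => (1 - u t) * v' t - u' t * v t)
      (nhdsWithin 0 (Set.Ioi 0)) (nhds 0)) :
    Filter.Tendsto (fun t => v t / (1 - u t)) (nhdsWithin 0 (Set.Ioi 0)) (nhds 0) := by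
  have hmem : Set.Ioc (0:ℝ) δ ∈ 𝓝[>] (0:ℝ) := Ioc_mem_nhdsGT hδ
  -- u is strictly decreasing on [0, δ], hence 1 - u > 0 on (0, δ]
  have hanti : StrictAntiOn u (Set.Icc 0 δ) := by
    apply strictAntiOn_of_deriv_neg (convex_Icc 0 δ) hu
    intro x hx
    rw [interior_Icc] at hx
    rw [(hud x ⟨hx.1, hx.2.le⟩).deriv]
    exact hu'neg x ⟨hx.1, hx.2.le⟩
  have hapos : ∀ t ∈ Set.Ioc (0:ℝ) δ, 0 < 1 - u t := by
    intro t ht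
    have := hanti (Set.left_mem_Icc.2 hδ.le) ⟨ht.1.le, ht.2⟩ ht.1
    rw [hu0] at this; linarith
  -- the two terms of hlim2 each tend to 0
  have hterm1 : Tendsto (fun t => (1 - u t) * v' t) (𝓝[>] 0) (𝓝 0) := by
    refine tendsto_of_tendsto_of_tendsto_of_le_of_le' tendsto_const_nhds hlim2 ?_ ?_
    · filter_upwards [hmem] with t ht
      exact mul_nonneg (hapos t ht).le (hv'nonneg t ht)
    · filter_upwards [hmem] with t ht
      nlinarith [hu'neg t ht, hvpos t ht]
  have hterm2 : Tendsto (fun t => -u' t * v t) (𝓝[>] 0) (𝓝 0) := by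
    refine tendsto_of_tendsto_of_tendsto_of_le_of_le' tendsto_const_nhds hlim2 ?_ ?_
    · filter_upwards [hmem] with t ht
      exact mul_nonneg (by linarith [hu'neg t ht]) (hvpos t ht).le
    · filter_upwards [hmem] with t ht
      nlinarith [hapos t ht, hv'nonneg t ht]
  -- eventually v t < 1 - u t
  have hlt1 : ∀ᶠ t in 𝓝[>] (0:ℝ), (1 - u t) * u' t + v t * v' t < -1 :=
    hlim1.eventually_lt_const (by norm_num)
  obtain ⟨ε₀, hε₀, hsub⟩ := mem_nhdsGT_iff_exists_Ioc_subset.1 (inter_mem hlt1 hmem)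
  set ε := min ε₀ δ with hε
  have hεpos : 0 < ε := lt_min hε₀ hδ
  have hεδ : ε ≤ δ := min_le_right _ _
  have hIoc : ∀ t ∈ Set.Ioc (0:ℝ) ε, (1 - u t) * u' t + v t * v' t < -1 ∧ t ∈ Set.Ioc (0:ℝ) δ :=
    fun t ht => hsub ⟨ht.1, ht.2.trans (min_le_left _ _)⟩
  have hvlta : ∀ t ∈ Set.Ioc (0:ℝ) ε, v t < 1 - u t := by
    -- g = v² - (1-u)² is strictly decreasing on [0, ε] and g 0 = 0
    have hganti : StrictAntiOn (fun t => v t * v t - (1 - u t) * (1 - u t)) (Set.Icc 0 ε) := by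
      apply strictAntiOn_of_deriv_neg (convex_Icc 0 ε)
      · exact ((hv.mono (Icc_subset_Icc_right hεδ)).mul (hv.mono (Icc_subset_Icc_right hεδ))).sub
          (((continuousOn_const.sub (hu.mono (Icc_subset_Icc_right hεδ)))).mul
            (continuousOn_const.sub (hu.mono (Icc_subset_Icc_right hεδ))))
      · intro x hx
        rw [interior_Icc] at hx
        have hxIoc : x ∈ Set.Ioc (0:ℝ) ε := ⟨hx.1, hx.2.le⟩
        obtain ⟨hkey, hxδ⟩ := hIoc x hxIoc
        have hd : HasDerivAt (fun t => v t * v t - (1 - u t) * (1 - u t))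
            (v' x * v x + v x * v' x -
              ((0 - u' x) * (1 - u x) + (1 - u x) * (0 - u' x))) x :=
          ((hvd x hxδ).mul (hvd x hxδ)).sub
            (((hasDerivAt_const x (1:ℝ)).sub (hud x hxδ)).mul
              ((hasDerivAt_const x (1:ℝ)).sub (hud x hxδ)))
        rw [hd.deriv]
        nlinarith
    intro t ht
    have h0 : (0:ℝ) ∈ Set.Icc (0:ℝ) ε := Set.left_mem_Icc.2 hεpos.le
    have := hganti h0 ⟨ht.1.le, ht.2⟩ ht.1
    simp only [hv0, hu0] at this
    have hsq : v t * v t < (1 - u t) * (1 - u t) := by linarith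
    have htδ := (hIoc t ht).2
    nlinarith [hvpos t htδ, hapos t htδ]
  -- v v' → 0
  have hvv' : Tendsto (fun t => v t * v' t) (𝓝[>] 0) (𝓝 0) := by
    refine tendsto_of_tendsto_of_tendsto_of_le_of_le' tendsto_const_nhds hterm1 ?_ ?_
    · filter_upwards [hmem] with t ht
      exact mul_nonneg (hvpos t ht).le (hv'nonneg t ht)
    · filter_upwards [hmem, Ioc_mem_nhdsGT hεpos] with t ht htε
      exact mul_le_mul_of_nonneg_right (hvlta t htε).le (hv'nonneg t ht)
  -- (1-u)(-u') → 2
  have haa' : Tendsto (fun t => (1 - u t) * -u' t) (𝓝[>] 0) (𝓝 2) := by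
    have : Tendsto (fun t => v t * v' t - ((1 - u t) * u' t + v t * v' t)) (𝓝[>] 0)
        (𝓝 (0 - (-2))) := hvv'.sub hlim1
    norm_num at this
    exact this.congr (fun t => by ring)
  -- L'Hôpital for v² / (1-u)²
  have hu1 : Tendsto u (𝓝[>] 0) (𝓝 1) := by
    have : Tendsto u (𝓝[Set.Icc 0 δ] 0) (𝓝 1) := by
      have := (hu 0 (Set.left_mem_Icc.2 hδ.le)).tendsto
      rwa [hu0] at this
    exact this.mono_left (by
      rw [← nhdsWithin_Ioc_eq_nhdsGT hδ]
      exact nhdsWithin_mono _ Set.Ioc_subset_Icc_self)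
  have hv0' : Tendsto v (𝓝[>] 0) (𝓝 0) := by
    have : Tendsto v (𝓝[Set.Icc 0 δ] 0) (𝓝 0) := by
      have := (hv 0 (Set.left_mem_Icc.2 hδ.le)).tendsto
      rwa [hv0] at this
    exact this.mono_left (by
      rw [← nhdsWithin_Ioc_eq_nhdsGT hδ]
      exact nhdsWithin_mono _ Set.Ioc_subset_Icc_self)
  have hlhop : Tendsto (fun t => (v t * v t) / ((1 - u t) * (1 - u t))) (𝓝[>] 0) (𝓝 0) := by
    apply HasDerivAt.lhopital_zero_right_on_Ioo (f' := fun t => v' t * v t + v t * v' t)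
      (g' := fun t => (0 - u' t) * (1 - u t) + (1 - u t) * (0 - u' t)) hδ
    · intro x hx
      exact (hvd x ⟨hx.1, hx.2.le⟩).mul (hvd x ⟨hx.1, hx.2.le⟩)
    · intro x hx
      exact ((hasDerivAt_const x (1:ℝ)).sub (hud x ⟨hx.1, hx.2.le⟩)).mul
        ((hasDerivAt_const x (1:ℝ)).sub (hud x ⟨hx.1, hx.2.le⟩))
    · intro x hx
      have h1 := hapos x ⟨hx.1, hx.2.le⟩
      have h2 := hu'neg x ⟨hx.1, hx.2.le⟩
      nlinarith
    · have := hv0'.mul hv0'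
      norm_num at this; exact this
    · have : Tendsto (fun t => (1 - u t) * (1 - u t)) (𝓝[>] 0) (𝓝 ((1-1) * (1-1))) :=
        ((tendsto_const_nhds.sub hu1)).mul ((tendsto_const_nhds.sub hu1))
      norm_num at this; exact this
    · have hnum : Tendsto (fun t => v' t * v t + v t * v' t) (𝓝[>] 0) (𝓝 0) := by
        have : Tendsto (fun t => v t * v' t + v t * v' t) (𝓝[>] 0) (𝓝 (0 + 0)) :=
          hvv'.add hvv'
        norm_num at this
        exact this.congr (fun t => by ring)
      have hden : Tendsto (fun t => (0 - u' t) * (1 - u t) + (1 - u t) * (0 - u' t)) (𝓝[>] 0) (𝓝 4) := by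
        have : Tendsto (fun t => (1 - u t) * -u' t + (1 - u t) * -u' t) (𝓝[>] 0)
            (𝓝 (2 + 2)) := haa'.add haa'
        norm_num at this
        exact this.congr (fun t => by ring)
      have hd := hnum.div hden (by norm_num : (4:ℝ) ≠ 0)
      rw [show (0:ℝ)/4 = 0 by norm_num] at hd
      exact hd
  -- conclude via sqrt
  have hsqrt : Tendsto (fun t => Real.sqrt ((v t * v t) / ((1 - u t) * (1 - u t))))
      (𝓝[>] 0) (𝓝 0) := by
    have := (Real.continuous_sqrt.tendsto 0).comp hlhop
    simpa [Function.comp_def] using this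
  refine hsqrt.congr' ?_
  filter_upwards [hmem] with t ht
  have h1 := hapos t ht
  have h2 := hvpos t ht
  rw [show (v t * v t) / ((1 - u t) * (1 - u t)) = (v t / (1 - u t)) * (v t / (1 - u t)) by
    field_simp]
  exact Real.sqrt_mul_self (by positivity)
end
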